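/- arXiv:2208.00927 — 7 statements merged into one kernel-verified Lean document; each statement's English description precedes it below -/
import Mathlib

section
/- Let V be a finite-dimensional vector space over ℚ. Every sector in V can be written as a disjoint union of finitely many simple sectors; that is, for every polytope C ⊆ V and every lattice Λ ⊆ V there exist finitely many pairwise disjoint simple sectors Σ₁, …, Σ_k whose union is C ∩ Λ. -/
/-- A polytope in a ℚ-vector space `V`: a set cut out by finitely many inequalities
`fᵢ(x) ≥ cᵢ` with `fᵢ : V →ₗ[ℚ] ℚ` and `cᵢ ∈ ℚ` (not necessarily bounded). -/
def IsPolytope {V : Type*} [AddCommGroup V] [Module ℚ V] (C : Set V) : Prop :=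
  ∃ (k : ℕ) (f : Fin k → V →ₗ[ℚ] ℚ) (c : Fin k → ℚ), C = {x | ∀ i, c i ≤ f i x}

/-- A lattice in a ℚ-vector space `V`: a set of the form
`{x₀ + a₁e₁ + ⋯ + a_m e_m : aᵢ ∈ ℤ}` with `e₁, …, e_m` linearly independent. -/
def IsLattice {V : Type*} [AddCommGroup V] [Module ℚ V] (Λ : Set V) : Prop :=
  ∃ (m : ℕ) (x₀ : V) (e : Fin m → V), LinearIndependent ℚ e ∧
    Λ = {x | ∃ a : Fin m → ℤ, x = x₀ + ∑ i, a i • e i}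

/-- A simple sector in a ℚ-vector space `V`: a set of the form
`{x₀ + a₁e₁ + ⋯ + a_m e_m : aᵢ ∈ ℤ, aᵢ ≥ 0}` with `e₁, …, e_m` linearly independent. -/
def IsSimpleSector {V : Type*} [AddCommGroup V] [Module ℚ V] (S : Set V) : Prop :=
  ∃ (m : ℕ) (x₀ : V) (e : Fin m → V), LinearIndependent ℚ e ∧
    S = {x | ∃ a : Fin m → ℕ, x = x₀ + ∑ i, a i • e i}

namespace SectorAux


open Set Submodule

variable {V : Type*} [AddCommGroup V] [Module ℚ V]

/-- parametrized ℕ-cone -/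
def NPar (x₀ : V) {s : ℕ} (g : Fin s → V) : Set V :=
  {x | ∃ a : Fin s → ℕ, x = x₀ + ∑ j, a j • g j}

lemma nat_comb_inj {m : ℕ} {u : Fin m → V} (hu : LinearIndependent ℚ u) {n n' : Fin m → ℕ}
    (h : ∑ j, n j • u j = ∑ j, n' j • u j) : n = n' := by
  have h2 : ∑ j, ((n j : ℚ) - (n' j : ℚ)) • u j = 0 := by
    simp only [sub_smul, Finset.sum_sub_distrib, Nat.cast_smul_eq_nsmul, h, sub_self]
  have h3 := Fintype.linearIndependent_iff.mp hu _ h2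
  funext j
  have := h3 j
  have : (n j : ℚ) = (n' j : ℚ) := by linarith [this]
  exact_mod_cast this

/-- A piece: a simple sector whose generators lie in the span of `u`. -/
def IsPiece {m : ℕ} (u : Fin m → V) (S : Set V) : Prop :=
  ∃ (s : ℕ) (p : V) (g : Fin s → V), LinearIndependent ℚ g ∧
    (∀ j, g j ∈ span ℚ (range u)) ∧ S = NPar p g

/-- The target conclusion of the core decomposition lemma. -/
def CoreOut {m : ℕ} (u : Fin m → V) (T : Set V) : Prop :=
  ∃ (k : ℕ) (S : Fin k → Set V),
    (∀ i, IsPiece u (S i)) ∧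
    (∀ i₁ i₂, i₁ ≠ i₂ → Disjoint (S i₁) (S i₂)) ∧
    (⋃ i, S i) = T

/-- Glue a finite family of disjoint pieces into an existential decomposition. -/
lemma glue {ι : Type} [Fintype ι] (Q : Set V → Prop) (sets : ι → Set V)
    (h : ∀ t, Q (sets t)) (hdis : ∀ t₁ t₂ : ι, t₁ ≠ t₂ → Disjoint (sets t₁) (sets t₂)) :
    ∃ (k : ℕ) (S : Fin k → Set V), (∀ i, Q (S i)) ∧
      (∀ i j, i ≠ j → Disjoint (S i) (S j)) ∧ (⋃ i, S i) = ⋃ t, sets t := by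
  refine ⟨Fintype.card ι, fun i => sets ((Fintype.equivFin ι).symm i), fun i => h _, ?_, ?_⟩
  · intro i j hij
    exact hdis _ _ fun hh => hij ((Fintype.equivFin ι).symm.injective hh)
  · ext z
    simp only [Set.mem_iUnion]
    constructor
    · rintro ⟨i, hi⟩; exact ⟨_, hi⟩
    · rintro ⟨t, ht⟩
      exact ⟨Fintype.equivFin ι t, by simpa using ht⟩

section Cap

variable {m : ℕ} (N : ℕ) (x₀ : V) (u : Fin m → V)

open Classical in
private lemma capSum (c : Fin m → Fin (N+1))
    (a : Fin (Fintype.card {i // c i = Fin.last N}) → ℕ) :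
    ∑ j, a j • u (((Fintype.equivFin {i // c i = Fin.last N}).symm j : {i // c i = Fin.last N}) : Fin m)
      = ∑ i, (if h : c i = Fin.last N then
          a ((Fintype.equivFin {i // c i = Fin.last N}) ⟨i, h⟩) else 0) • u i := by
  classical
  set E := Fintype.equivFin {i // c i = Fin.last N}
  rw [← Fintype.sum_subtype_add_sum_subtype (fun i => c i = Fin.last N)
    (fun i => (if h : c i = Fin.last N then a (E ⟨i, h⟩) else 0) • u i)]
  have h2 : ∑ i : {x // ¬ c x = Fin.last N},
      (if h : c (i : Fin m) = Fin.last N then a (E ⟨i, h⟩) else 0) • u i = 0 := by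
    apply Finset.sum_eq_zero
    intro i _
    rw [dif_neg i.2]
    simp
  rw [h2, add_zero]
  refine Fintype.sum_equiv E.symm _ _ ?_
  intro j
  rw [dif_pos (E.symm j).2]
  have he : (⟨((E.symm j : {i // c i = Fin.last N}) : Fin m), (E.symm j).2⟩ :
      {i // c i = Fin.last N}) = E.symm j := rfl
  rw [he, Equiv.apply_symm_apply]

private lemma capMem (c : Fin m → Fin (N+1)) (z : V) :
    z ∈ NPar (x₀ + ∑ i, ((c i : ℕ)) • u i)
        (fun j => u (((Fintype.equivFin {i // c i = Fin.last N}).symm j :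
          {i // c i = Fin.last N}) : Fin m)) ↔
      ∃ n : Fin m → ℕ, (∀ i, min (n i) N = (c i : ℕ)) ∧ z = x₀ + ∑ j, n j • u j := by
  classical
  set E := Fintype.equivFin {i // c i = Fin.last N} with hE
  constructor
  · rintro ⟨a, rfl⟩
    refine ⟨fun i => (c i : ℕ) + (if h : c i = Fin.last N then a (E ⟨i, h⟩) else 0), ?_, ?_⟩
    · intro i
      dsimp only
      by_cases h : c i = Fin.last N
      · rw [dif_pos h]
        have h1 : (c i : ℕ) = N := by rw [h]; rfl
        rw [h1]
        exact min_eq_right (Nat.le_add_right _ _)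
      · rw [dif_neg h, add_zero]
        have h1 : (c i : ℕ) ≤ N := Fin.is_le _
        have h2 : (c i : ℕ) ≠ N := by
          intro hc; exact h (Fin.ext hc)
        exact min_eq_left (by omega)
    · rw [capSum N u c a, add_assoc, ← Finset.sum_add_distrib]
      congr 1
      apply Finset.sum_congr rfl
      intro i _
      rw [add_smul]
  · rintro ⟨n, hcap, rfl⟩
    refine ⟨fun j => n ((E.symm j : {i // c i = Fin.last N}) : Fin m) - N, ?_⟩
    rw [capSum N u c _, add_assoc, ← Finset.sum_add_distrib]
    congr 1
    apply Finset.sum_congr rfl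
    intro i _
    rw [← add_smul]
    congr 1
    by_cases h : c i = Fin.last N
    · rw [dif_pos h]
      have h1 : (c i : ℕ) = N := by rw [h]; rfl
      have h2 : N ≤ n i := by have := hcap i; omega
      have h3 : ((E.symm (E ⟨i, h⟩) : {i // c i = Fin.last N}) : Fin m) = i := by
        rw [Equiv.symm_apply_apply]
      rw [h3]
      omega
    · rw [dif_neg h]
      have h1 : (c i : ℕ) ≤ N := Fin.is_le _
      have h2 : (c i : ℕ) ≠ N := fun hc => h (Fin.ext hc)
      have := hcap i
      omega

lemma cap_decomp (hu : LinearIndependent ℚ u) (A : Set (Fin m → ℕ))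
    (hA : ∀ n n' : Fin m → ℕ, (∀ i, n i = n' i ∨ (N ≤ n i ∧ N ≤ n' i)) → n ∈ A → n' ∈ A) :
    CoreOut u {x | ∃ n, n ∈ A ∧ x = x₀ + ∑ j, n j • u j} := by
  classical
  set ι := {c : Fin m → Fin (N+1) // (fun i => ((c i : ℕ))) ∈ A} with hι
  set sets : ι → Set V := fun c =>
    NPar (x₀ + ∑ i, (((c : Fin m → Fin (N+1)) i : ℕ)) • u i)
      (fun j => u (((Fintype.equivFin {j // (c : Fin m → Fin (N+1)) j = Fin.last N}).symm j :
        {j // (c : Fin m → Fin (N+1)) j = Fin.last N}) : Fin m)) with hsets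
  have hmem : ∀ (c : ι) (z : V), z ∈ sets c ↔
      ∃ n : Fin m → ℕ, (∀ i, min (n i) N = ((c : Fin m → Fin (N+1)) i : ℕ)) ∧
        z = x₀ + ∑ j, n j • u j := fun c z => capMem N x₀ u _ z
  have hun : (⋃ c, sets c) = {x | ∃ n, n ∈ A ∧ x = x₀ + ∑ j, n j • u j} := by
    ext z
    simp only [Set.mem_iUnion, Set.mem_setOf_eq]
    constructor
    · rintro ⟨c, hz⟩
      rw [hmem] at hz
      obtain ⟨n, hc, rfl⟩ := hz
      refine ⟨n, ?_, rfl⟩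
      apply hA (fun j => ((c : Fin m → Fin (N+1)) j : ℕ)) n _ c.2
      intro j
      have hj := hc j
      rcases le_total (n j) N with h | h
      · rw [min_eq_left h] at hj
        left; omega
      · rw [min_eq_right h] at hj
        right; exact ⟨by omega, h⟩
    · rintro ⟨n, hn, rfl⟩
      have hcap : ∀ j, min (n j) N ≤ N := fun j => min_le_right _ _
      refine ⟨⟨fun j => ⟨min (n j) N, by have := hcap j; omega⟩, ?_⟩, ?_⟩
      · apply hA n _ _ hn
        intro j
        dsimp only
        rcases le_total (n j) N with h | h
        · rw [min_eq_left h]; left; rfl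
        · rw [min_eq_right h]; right; exact ⟨h, le_refl _⟩
      · rw [hmem]
        exact ⟨n, fun j => rfl, rfl⟩
  rw [← hun]
  apply glue
  · intro c
    refine ⟨_, _, _, ?_, fun j => subset_span ⟨_, rfl⟩, rfl⟩
    apply hu.comp
    intro a b hab
    have : ((Fintype.equivFin {j // (c : Fin m → Fin (N+1)) j = Fin.last N}).symm a) =
        ((Fintype.equivFin {j // (c : Fin m → Fin (N+1)) j = Fin.last N}).symm b) :=
      Subtype.ext hab
    simpa using congrArg (Fintype.equivFin {j // (c : Fin m → Fin (N+1)) j = Fin.last N}) this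
  · intro c₁ c₂ hne
    rw [Set.disjoint_left]
    intro z hz1 hz2
    rw [hmem] at hz1 hz2
    obtain ⟨n1, hc1, hz1⟩ := hz1
    obtain ⟨n2, hc2, hz2⟩ := hz2
    have : n1 = n2 := nat_comb_inj hu (add_left_cancel (hz1.symm.trans hz2))
    apply hne
    apply Subtype.ext
    funext j
    apply Fin.ext
    rw [← hc1 j, ← hc2 j, this]

end Cap

section SignCases

variable {m : ℕ} (x₀ : V) (u : Fin m → V)

lemma core_nonneg (hu : LinearIndependent ℚ u) (α : Fin m → ℚ) (β : ℚ)
    (hα : ∀ i, 0 ≤ α i) :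
    CoreOut u {x | ∃ n : Fin m → ℕ,
      (β ≤ ∑ j, α j * (n j : ℚ)) ∧ x = x₀ + ∑ j, n j • u j} := by
  have h1 : ∀ i : Fin m, ∃ N : ℕ, (0 < α i → β ≤ α i * N) := by
    intro i
    by_cases h : 0 < α i
    · obtain ⟨N, hN⟩ := exists_nat_ge (β / α i)
      refine ⟨N, fun _ => ?_⟩
      rw [div_le_iff₀ h] at hN
      linarith
    · exact ⟨0, fun hc => absurd hc h⟩
  choose Nf hNf using h1
  set N := Finset.univ.sup Nf with hN
  have hNle : ∀ i, Nf i ≤ N := fun i => Finset.le_sup (Finset.mem_univ i)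
  have hset : {x : V | ∃ n : Fin m → ℕ,
      (β ≤ ∑ j, α j * (n j : ℚ)) ∧ x = x₀ + ∑ j, n j • u j} =
      {x : V | ∃ n, n ∈ {n : Fin m → ℕ | β ≤ ∑ j, α j * (n j : ℚ)} ∧
        x = x₀ + ∑ j, n j • u j} := rfl
  rw [hset]
  apply cap_decomp N x₀ u hu
  intro n n' hrel hn
  simp only [Set.mem_setOf_eq] at hn ⊢
  by_cases hex : ∃ i, 0 < α i ∧ N ≤ n' i
  · obtain ⟨i, hαi, hNi⟩ := hex
    calc β ≤ α i * Nf i := hNf i hαi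
    _ ≤ α i * n' i := by
        apply mul_le_mul_of_nonneg_left _ (le_of_lt hαi)
        exact_mod_cast le_trans (hNle i) hNi
    _ ≤ ∑ j, α j * (n' j : ℚ) := by
        apply Finset.single_le_sum (f := fun j => α j * ((n' j : ℕ) : ℚ)) _ (Finset.mem_univ i)
        intro j _
        exact mul_nonneg (hα j) (by positivity)
  · push_neg at hex
    have : ∑ j, α j * ((n j : ℕ) : ℚ) = ∑ j, α j * ((n' j : ℕ) : ℚ) := by
      apply Finset.sum_congr rfl
      intro j _
      rcases hrel j with h | ⟨h1', h2'⟩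
      · rw [h]
      · rcases eq_or_lt_of_le (hα j) with h0 | h0
        · rw [← h0]; ring
        · exact absurd (hex j h0) (not_lt.mpr h2')
    linarith
  
lemma core_nonpos (hu : LinearIndependent ℚ u) (α : Fin m → ℚ) (β : ℚ)
    (hα : ∀ i, α i ≤ 0) :
    CoreOut u {x | ∃ n : Fin m → ℕ,
      (β ≤ ∑ j, α j * (n j : ℚ)) ∧ x = x₀ + ∑ j, n j • u j} := by
  have h1 : ∀ i : Fin m, ∃ N : ℕ, (α i < 0 → α i * N < β) := by
    intro i
    by_cases h : α i < 0
    · obtain ⟨N, hN⟩ := exists_nat_gt (β / α i)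
      refine ⟨N, fun _ => ?_⟩
      have := (div_lt_iff_of_neg h).mp hN
      linarith
    · exact ⟨0, fun hc => absurd hc h⟩
  choose Nf hNf using h1
  set N := Finset.univ.sup Nf with hN
  have hNle : ∀ i, Nf i ≤ N := fun i => Finset.le_sup (Finset.mem_univ i)
  have hkey : ∀ (n : Fin m → ℕ) (i : Fin m), α i < 0 → N ≤ n i →
      ¬ (β ≤ ∑ j, α j * (n j : ℚ)) := by
    intro n i hαi hNi hβ
    have h2 : ∑ j, α j * ((n j : ℕ) : ℚ) ≤ α i * n i := by
      rw [← Finset.add_sum_erase _ _ (Finset.mem_univ i)]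
      have : ∑ j ∈ Finset.univ.erase i, α j * ((n j : ℕ) : ℚ) ≤ 0 := by
        apply Finset.sum_nonpos
        intro j _
        apply mul_nonpos_of_nonpos_of_nonneg (hα j)
        positivity
      linarith
    have h3 : α i * (n i : ℚ) ≤ α i * Nf i := by
      apply mul_le_mul_of_nonpos_left _ (le_of_lt hαi)
      exact_mod_cast le_trans (hNle i) hNi
    have := hNf i hαi
    linarith
  have hset : {x : V | ∃ n : Fin m → ℕ,
      (β ≤ ∑ j, α j * (n j : ℚ)) ∧ x = x₀ + ∑ j, n j • u j} =
      {x : V | ∃ n, n ∈ {n : Fin m → ℕ | β ≤ ∑ j, α j * (n j : ℚ)} ∧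
        x = x₀ + ∑ j, n j • u j} := rfl
  rw [hset]
  apply cap_decomp N x₀ u hu
  intro n n' hrel hn
  simp only [Set.mem_setOf_eq] at hn ⊢
  by_cases hex : ∃ i, α i < 0 ∧ N ≤ n i
  · obtain ⟨i, hαi, hNi⟩ := hex
    exact absurd hn (hkey n i hαi hNi)
  · push_neg at hex
    have : ∑ j, α j * ((n j : ℕ) : ℚ) = ∑ j, α j * ((n' j : ℕ) : ℚ) := by
      apply Finset.sum_congr rfl
      intro j _
      rcases hrel j with h | ⟨h1', h2'⟩
      · rw [h]
      · rcases lt_or_eq_of_le (hα j) with h0 | h0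
        · exact absurd (hex j h0) (not_lt.mpr h1')
        · rw [h0]; ring
    linarith

end SignCases

lemma int_comb_inj {m : ℕ} {u : Fin m → V} (hu : LinearIndependent ℚ u) {n n' : Fin m → ℤ}
    (h : ∑ j, n j • u j = ∑ j, n' j • u j) : n = n' := by
  have h2 : ∑ j, ((n j : ℚ) - (n' j : ℚ)) • u j = 0 := by
    simp only [sub_smul, Finset.sum_sub_distrib, Int.cast_smul_eq_zsmul, h, sub_self]
  have h3 := Fintype.linearIndependent_iff.mp hu _ h2
  funext j
  have h4 := h3 j
  have : (n j : ℚ) = (n' j : ℚ) := by linarith [h4]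
  exact_mod_cast this

lemma core_mixed {m : ℕ} (x₀ : V) (u : Fin (m+1) → V) (hu : LinearIndependent ℚ u)
    (α : Fin (m+1) → ℚ) (β : ℚ)
    (ih : ∀ (y₀ : V) (v : Fin m → V), LinearIndependent ℚ v → ∀ (γ : Fin m → ℚ) (δ : ℚ),
      CoreOut v {x | ∃ n : Fin m → ℕ, (δ ≤ ∑ j, γ j * (n j : ℚ)) ∧ x = y₀ + ∑ j, n j • v j})
    (x y : Fin (m+1)) (hx : 0 < α x) (hy : α y < 0) :
    CoreOut u {z | ∃ n : Fin (m+1) → ℕ,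
      (β ≤ ∑ j, α j * (n j : ℚ)) ∧ z = x₀ + ∑ j, n j • u j} := by
  classical
  have hxy : x ≠ y := by rintro rfl; linarith
  obtain ⟨x', hx'⟩ := Fin.exists_succAbove_eq hxy
  obtain ⟨a', b', ha'0, hb'0, key⟩ :
      ∃ a' b' : ℕ, 0 < a' ∧ 0 < b' ∧ (b' : ℚ) * α x + (a' : ℚ) * α y = 0 := by
    set q : ℚ := -α y with hq
    have hq0 : 0 < q := by rw [hq]; linarith
    have hnumx0 : 0 < (α x).num := Rat.num_pos.mpr hx
    have hnumq0 : 0 < q.num := Rat.num_pos.mpr hq0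
    have hnumx : (((α x).num.toNat : ℕ) : ℚ) = ((α x).num : ℚ) := by
      exact_mod_cast congrArg (Int.cast : ℤ → ℚ) (Int.toNat_of_nonneg hnumx0.le)
    have hnumq : ((q.num.toNat : ℕ) : ℚ) = (q.num : ℚ) := by
      exact_mod_cast congrArg (Int.cast : ℤ → ℚ) (Int.toNat_of_nonneg hnumq0.le)
    have hden : ∀ r : ℚ, (r.den : ℚ) * r = r.num := by
      intro r
      have h : (r.den : ℚ) ≠ 0 := by exact_mod_cast r.den_nz
      calc (r.den : ℚ) * r = (r.den : ℚ) * ((r.num : ℚ) / (r.den : ℚ)) := by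
            rw [Rat.num_div_den]
      _ = r.num := by field_simp
    refine ⟨(α x).num.toNat * q.den, q.num.toNat * (α x).den,
      Nat.mul_pos (by omega) (Nat.pos_of_ne_zero q.den_nz),
      Nat.mul_pos (by omega) (Nat.pos_of_ne_zero (α x).den_nz), ?_⟩
    have e1 : ((q.num.toNat * (α x).den : ℕ) : ℚ) * α x = (q.num : ℚ) * ((α x).num : ℚ) := by
      calc ((q.num.toNat * (α x).den : ℕ) : ℚ) * α x
          = ((q.num.toNat : ℕ) : ℚ) * (((α x).den : ℚ) * α x) := by push_cast; ring
      _ = (q.num : ℚ) * ((α x).num : ℚ) := by rw [hden, hnumq]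
    have e2 : (((α x).num.toNat * q.den : ℕ) : ℚ) * α y = ((α x).num : ℚ) * (-(q.num : ℚ)) := by
      have h3 : α y = -q := by rw [hq]; ring
      calc (((α x).num.toNat * q.den : ℕ) : ℚ) * α y
          = (((α x).num.toNat : ℕ) : ℚ) * (((q.den : ℚ)) * α y) := by push_cast; ring
      _ = ((α x).num : ℚ) * (-(q.num : ℚ)) := by
            rw [hnumx, h3, mul_neg, hden]
    rw [e1, e2]; ring
  set w : Fin (m+1) → ℕ := fun i => if i = x then b' else if i = y then a' else 0 with hw
  set vV : V := b' • u x + a' • u y with hvV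
  have hwx : w x = b' := by simp [hw]
  have hwy : w y = a' := by
    have : ¬ (y = x) := fun h => hxy h.symm
    simp [hw, this]
  have hw0 : ∀ i, i ≠ x → i ≠ y → w i = 0 := by
    intro i h1 h2; simp [hw, h1, h2]
  have hsumwV : ∀ k : ℕ, (∑ j, (k * w j) • u j) = k • vV := by
    intro k
    rw [Finset.sum_eq_add_of_mem x y (Finset.mem_univ x) (Finset.mem_univ y) hxy ?_]
    · rw [hwx, hwy, hvV, smul_add, mul_smul k b' (u x), mul_smul k a' (u y)]
    · intro c _ hc
      rw [hw0 c hc.1 hc.2, Nat.mul_zero, zero_smul]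
  have hsumwα : ∀ k : ℕ, (∑ j, α j * ((k * w j : ℕ) : ℚ)) = 0 := by
    intro k
    rw [Finset.sum_eq_add_of_mem x y (Finset.mem_univ x) (Finset.mem_univ y) hxy ?_]
    · rw [hwx, hwy]
      push_cast
      have h5 : α x * (k * b') + α y * (k * a')
          = (k : ℚ) * ((b' : ℚ) * α x + (a' : ℚ) * α y) := by ring
      rw [h5, key, mul_zero]
    · intro c _ hc
      rw [hw0 c hc.1 hc.2, Nat.mul_zero, Nat.cast_zero, mul_zero]
  have hsplitV : ∀ (n : Fin (m+1) → ℕ) (k : ℕ),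
      (∑ j, (n j + k * w j) • u j) = (∑ j, n j • u j) + k • vV := by
    intro n k
    rw [← hsumwV k, ← Finset.sum_add_distrib]
    exact Finset.sum_congr rfl fun j _ => add_smul _ _ _
  have hsplitα : ∀ (n : Fin (m+1) → ℕ) (k : ℕ),
      (∑ j, α j * ((n j + k * w j : ℕ) : ℚ)) = ∑ j, α j * (n j : ℚ) := by
    intro n k
    have h6 : ∀ j, α j * ((n j + k * w j : ℕ) : ℚ)
        = α j * (n j : ℚ) + α j * ((k * w j : ℕ) : ℚ) := by
      intro j; push_cast; ring
    rw [Finset.sum_congr rfl fun j _ => h6 j, Finset.sum_add_distrib, hsumwα, add_zero]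
  -- sub-families
  set u₁ : Fin m → V := u ∘ x.succAbove with hu₁def
  have hu₁ : LinearIndependent ℚ u₁ := hu.comp _ Fin.succAbove_right_injective
  set α₁ : Fin m → ℚ := α ∘ x.succAbove with hα₁def
  set u₂ : Fin m → V := u ∘ y.succAbove with hu₂def
  have hu₂ : LinearIndependent ℚ u₂ := hu.comp _ Fin.succAbove_right_injective
  set α₂ : Fin m → ℚ := α ∘ y.succAbove with hα₂def
  have hE1u : ∀ (cv : ℕ) (n' : Fin m → ℕ),
      (∑ j, (Fin.insertNth x cv n' : Fin (m+1) → ℕ) j • u j) = cv • u x + ∑ j, n' j • u₁ j := by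
    intro cv n'
    rw [Fin.sum_univ_succAbove (fun j => (Fin.insertNth x cv n' : Fin (m+1) → ℕ) j • u j) x]
    simp [Fin.insertNth_apply_same, Fin.insertNth_apply_succAbove, hu₁def]
  have hE1α : ∀ (cv : ℕ) (n' : Fin m → ℕ),
      (∑ j, α j * ((Fin.insertNth x cv n' : Fin (m+1) → ℕ) j : ℚ)) = α x * cv + ∑ j, α₁ j * (n' j : ℚ) := by
    intro cv n'
    rw [Fin.sum_univ_succAbove (fun j => α j * ((Fin.insertNth x cv n' : Fin (m+1) → ℕ) j : ℚ)) x]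
    simp [Fin.insertNth_apply_same, Fin.insertNth_apply_succAbove, hα₁def]
  have hsum2u : ∀ (f : Fin m → ℕ),
      (∑ j, (f j + if j = x' then b' else 0) • u₂ j)
        = b' • u x + ∑ j, f j • u₂ j := by
    intro f
    have h7 : ∀ j : Fin m, (f j + if j = x' then b' else 0) • u₂ j
        = (if j = x' then b' • u₂ j else 0) + f j • u₂ j := by
      intro j
      by_cases h : j = x'
      · simp [h, add_smul, add_comm]
      · simp [h]
    rw [Finset.sum_congr rfl fun j _ => h7 j, Finset.sum_add_distrib,
      Finset.sum_ite_eq' Finset.univ x' (fun j => b' • u₂ j)]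
    have h8 : u₂ x' = u x := by rw [hu₂def]; simp [hx']
    simp [h8]
  have hE2u : ∀ (dv : ℕ) (n' : Fin m → ℕ),
      (∑ j, (Fin.insertNth y dv (fun j => n' j + if j = x' then b' else 0) : Fin (m+1) → ℕ) j • u j)
        = (b' • u x + dv • u y) + ∑ j, n' j • u₂ j := by
    intro dv n'
    rw [Fin.sum_univ_succAbove (fun j => (Fin.insertNth y dv
      (fun j => n' j + if j = x' then b' else 0) : Fin (m+1) → ℕ) j • u j) y]
    rw [Fin.insertNth_apply_same]
    have h9 : ∀ j : Fin m, (Fin.insertNth y dv (fun j => n' j + if j = x' then b' else 0) : Fin (m+1) → ℕ)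
        (y.succAbove j) • u (y.succAbove j) = (n' j + if j = x' then b' else 0) • u₂ j := by
      intro j
      rw [Fin.insertNth_apply_succAbove]
      rfl
    rw [Finset.sum_congr rfl fun j _ => h9 j, hsum2u]
    abel
  have hE2α : ∀ (dv : ℕ) (n' : Fin m → ℕ),
      (∑ j, α j * ((Fin.insertNth y dv (fun j => n' j + if j = x' then b' else 0) : Fin (m+1) → ℕ) j : ℚ))
        = (α x * b' + α y * dv) + ∑ j, α₂ j * (n' j : ℚ) := by
    intro dv n'
    rw [Fin.sum_univ_succAbove (fun j => α j * ((Fin.insertNth y dv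
      (fun j => n' j + if j = x' then b' else 0) : Fin (m+1) → ℕ) j : ℚ)) y]
    rw [Fin.insertNth_apply_same]
    have h9 : ∀ j : Fin m, α (y.succAbove j) * (((Fin.insertNth y dv
        (fun j => n' j + if j = x' then b' else 0) : Fin (m+1) → ℕ) (y.succAbove j)) : ℚ)
        = α₂ j * (n' j : ℚ) + (if j = x' then α₂ j * b' else 0) := by
      intro j
      rw [Fin.insertNth_apply_succAbove]
      by_cases h : j = x'
      · simp only [h, if_pos]
        push_cast
        rw [hα₂def]
        simp only [Function.comp_apply]
        ring
      · simp only [h, if_neg, if_false]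
        push_cast
        rw [hα₂def]
        simp only [Function.comp_apply]
        ring
    rw [Finset.sum_congr rfl fun j _ => h9 j, Finset.sum_add_distrib,
      Finset.sum_ite_eq' Finset.univ x' (fun j => α₂ j * b')]
    have h10 : α₂ x' = α x := by rw [hα₂def]; simp [hx']
    simp only [Finset.mem_univ, if_true, h10]
    ring
  -- recursive decompositions
  have R1 := fun c : Fin b' =>
    ih (x₀ + (c : ℕ) • u x) u₁ hu₁ α₁ (β - α x * ((c : ℕ) : ℚ))
  choose k₁ S₁ hP₁ hdis₁ hun₁ using R1
  have R2 := fun d : Fin a' =>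
    ih (x₀ + (b' • u x + (d : ℕ) • u y)) u₂ hu₂ α₂
      (β - α x * ((b' : ℕ) : ℚ) - α y * ((d : ℕ) : ℚ))
  choose k₂ S₂ hP₂ hdis₂ hun₂ using R2
  choose s₁ p₁ g₁ hg₁ind hg₁span hg₁eq using hP₁
  choose s₂ p₂ g₂ hg₂ind hg₂span hg₂eq using hP₂
  -- vV is not in the span of the subfamilies
  have hvV₁ : vV ∉ span ℚ (Set.range u₁) := by
    intro hmem
    have hux_not : u x ∉ span ℚ (Set.range u₁) := by
      have h1 : Set.range u₁ = u '' {x}ᶜ := by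
        rw [hu₁def, Set.range_comp, Fin.range_succAbove]
      rw [h1]
      exact hu.notMem_span_image (by simp)
    have huy : u y ∈ span ℚ (Set.range u₁) := by
      obtain ⟨j, hj⟩ := Fin.exists_succAbove_eq (Ne.symm hxy)
      exact subset_span ⟨j, by rw [hu₁def]; simp [hj]⟩
    have h2 : ((b' : ℚ)) • u x ∈ span ℚ (Set.range u₁) := by
      have h3 : ((b' : ℚ)) • u x = vV - ((a' : ℚ)) • u y := by
        rw [hvV, Nat.cast_smul_eq_nsmul, Nat.cast_smul_eq_nsmul]; abel
      rw [h3]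
      exact sub_mem hmem (Submodule.smul_mem _ _ huy)
    have hb'Q : ((b' : ℚ)) ≠ 0 := Nat.cast_ne_zero.mpr hb'0.ne' 
    have h4 := Submodule.smul_mem _ ((b' : ℚ))⁻¹ h2
    rw [inv_smul_smul₀ hb'Q] at h4
    exact hux_not h4
  have hvV₂ : vV ∉ span ℚ (Set.range u₂) := by
    intro hmem
    have huy_not : u y ∉ span ℚ (Set.range u₂) := by
      have h1 : Set.range u₂ = u '' {y}ᶜ := by
        rw [hu₂def, Set.range_comp, Fin.range_succAbove]
      rw [h1]
      exact hu.notMem_span_image (by simp)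
    have hux : u x ∈ span ℚ (Set.range u₂) := subset_span ⟨x', by rw [hu₂def]; simp [hx']⟩
    have h2 : ((a' : ℚ)) • u y ∈ span ℚ (Set.range u₂) := by
      have h3 : ((a' : ℚ)) • u y = vV - ((b' : ℚ)) • u x := by
        rw [hvV, Nat.cast_smul_eq_nsmul, Nat.cast_smul_eq_nsmul]; abel
      rw [h3]
      exact sub_mem hmem (Submodule.smul_mem _ _ hux)
    have ha'Q : ((a' : ℚ)) ≠ 0 := Nat.cast_ne_zero.mpr ha'0.ne' 
    have h4 := Submodule.smul_mem _ ((a' : ℚ))⁻¹ h2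
    rw [inv_smul_smul₀ ha'Q] at h4
    exact huy_not h4
  have hvVspan : vV ∈ span ℚ (Set.range u) := by
    rw [hvV]
    exact add_mem (nsmul_mem (subset_span (Set.mem_range_self x)) b') (nsmul_mem (subset_span (Set.mem_range_self y)) a')
  have hsnocMem : ∀ (p : V) (s : ℕ) (g : Fin s → V) (z : V),
      z ∈ NPar p (Fin.snoc g vV) ↔ ∃ (zz : V) (k : ℕ), zz ∈ NPar p g ∧ z = zz + k • vV := by
    intro p s g z
    constructor
    · rintro ⟨a, rfl⟩
      refine ⟨p + ∑ j, a j.castSucc • g j, a (Fin.last s), ⟨_, rfl⟩, ?_⟩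
      rw [Fin.sum_univ_castSucc (fun j => a j • (Fin.snoc g vV : Fin (s+1) → V) j)]
      simp only [Fin.snoc_castSucc, Fin.snoc_last]
      rw [add_assoc]
    · rintro ⟨zz, k, ⟨a, rfl⟩, rfl⟩
      refine ⟨Fin.snoc a k, ?_⟩
      rw [Fin.sum_univ_castSucc (fun j => (Fin.snoc a k : Fin (s+1) → ℕ) j • (Fin.snoc g vV : Fin (s+1) → V) j)]
      simp only [Fin.snoc_castSucc, Fin.snoc_last]
      rw [add_assoc]
  set ι := ((Σ c : Fin b', Fin (k₁ c)) ⊕ (Σ d : Fin a', Fin (k₂ d))) with hι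
  set sets : ι → Set V := fun t =>
    Sum.elim (fun (t : Σ c : Fin b', Fin (k₁ c)) => NPar (p₁ t.1 t.2) (Fin.snoc (g₁ t.1 t.2) vV))
             (fun (t : Σ d : Fin a', Fin (k₂ d)) => NPar (p₂ t.1 t.2) (Fin.snoc (g₂ t.1 t.2) vV))
             t with hsets
  -- analysis of membership in a piece
  have hana₁ : ∀ (c : Fin b') (i : Fin (k₁ c)) (z : V),
      z ∈ NPar (p₁ c i) (Fin.snoc (g₁ c i) vV) →
      ∃ (k : ℕ) (r : Fin (m+1) → ℕ), r x = (c : ℕ) ∧ (β ≤ ∑ j, α j * (r j : ℚ)) ∧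
        z = x₀ + ∑ j, (r j + k * w j) • u j ∧ (x₀ + ∑ j, r j • u j) ∈ S₁ c i := by
    intro c i z hz
    rw [hsnocMem] at hz
    obtain ⟨zz, k, hzz, rfl⟩ := hz
    rw [← hg₁eq c i] at hzz
    have hzz2 : zz ∈ ⋃ i, S₁ c i := Set.mem_iUnion.mpr ⟨i, hzz⟩
    rw [hun₁ c] at hzz2
    obtain ⟨n', hn', hzzeq⟩ := hzz2
    subst hzzeq
    refine ⟨k, Fin.insertNth x (c : ℕ) n', Fin.insertNth_apply_same _ _ _, ?_, ?_, ?_⟩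
    · rw [hE1α]
      linarith [hn']
    · rw [hsplitV, hE1u]
      simp only [add_assoc]
    · rw [hE1u, ← add_assoc]
      exact hzz
  have hana₂ : ∀ (d : Fin a') (i : Fin (k₂ d)) (z : V),
      z ∈ NPar (p₂ d i) (Fin.snoc (g₂ d i) vV) →
      ∃ (k : ℕ) (r : Fin (m+1) → ℕ), (b' ≤ r x ∧ r y = (d : ℕ)) ∧
        (β ≤ ∑ j, α j * (r j : ℚ)) ∧
        z = x₀ + ∑ j, (r j + k * w j) • u j ∧ (x₀ + ∑ j, r j • u j) ∈ S₂ d i := by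
    intro d i z hz
    rw [hsnocMem] at hz
    obtain ⟨zz, k, hzz, rfl⟩ := hz
    rw [← hg₂eq d i] at hzz
    have hzz2 : zz ∈ ⋃ i, S₂ d i := Set.mem_iUnion.mpr ⟨i, hzz⟩
    rw [hun₂ d] at hzz2
    obtain ⟨n', hn', hzzeq⟩ := hzz2
    subst hzzeq
    refine ⟨k, Fin.insertNth y (d : ℕ) (fun j => n' j + if j = x' then b' else 0),
      ⟨?_, Fin.insertNth_apply_same _ _ _⟩, ?_, ?_, ?_⟩
    · have h11 := Fin.insertNth_apply_succAbove (α := fun _ => ℕ) y (d : ℕ)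
        (fun j => n' j + if j = x' then b' else 0) x'
      rw [hx'] at h11
      rw [if_pos rfl] at h11
      omega
    · rw [hE2α]
      linarith [hn']
    · rw [hsplitV, hE2u]
      simp only [add_assoc]
    · rw [hE2u, ← add_assoc]
      exact hzz
  -- synthesis
  have hsyn : ∀ (r : Fin (m+1) → ℕ) (k : ℕ), (β ≤ ∑ j, α j * (r j : ℚ)) →
      (r x < b' ∨ (b' ≤ r x ∧ r y < a')) →
      ∃ t : ι, (x₀ + ∑ j, (r j + k * w j) • u j) ∈ sets t := by
    intro r k hβr hB
    rcases hB with hrx | ⟨hrx, hry⟩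
    · have hr : Fin.insertNth x (r x) (x.removeNth r) = r := Fin.insertNth_self_removeNth x r
      have h12 := hE1α (r x) (x.removeNth r)
      rw [hr] at h12
      have h12u := hE1u (r x) (x.removeNth r)
      rw [hr] at h12u
      have h13 : β - α x * ((r x : ℕ) : ℚ) ≤ ∑ j, α₁ j * ((x.removeNth r j : ℕ) : ℚ) := by
        linarith [h12, hβr]
      have h14 : x₀ + ∑ j, r j • u j
          = (x₀ + (r x) • u x) + ∑ j, x.removeNth r j • u₁ j := by
        rw [h12u, ← add_assoc]
      have hzz : (x₀ + ∑ j, r j • u j) ∈ ⋃ i, S₁ ⟨r x, hrx⟩ i := by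
        rw [hun₁]
        exact ⟨x.removeNth r, h13, h14⟩
      obtain ⟨i, hi⟩ := Set.mem_iUnion.mp hzz
      refine ⟨Sum.inl ⟨⟨r x, hrx⟩, i⟩, ?_⟩
      show _ ∈ NPar (p₁ ⟨r x, hrx⟩ i) (Fin.snoc (g₁ ⟨r x, hrx⟩ i) vV)
      rw [hsnocMem]
      refine ⟨x₀ + ∑ j, r j • u j, k, ?_, ?_⟩
      · rw [hg₁eq] at hi; exact hi
      · rw [hsplitV, ← add_assoc]
    · set nn : Fin m → ℕ := y.removeNth r with hnn
      have hnnx' : nn x' = r x := by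
        show r (y.succAbove x') = r x
        rw [hx']
      set n' : Fin m → ℕ := fun j => nn j - (if j = x' then b' else 0) with hn'
      have hn'eq : (fun j => n' j + if j = x' then b' else 0) = nn := by
        funext j
        by_cases h : j = x'
        · simp only [hn', h, if_pos]
          omega
        · simp only [hn', h, if_neg, if_false]
          omega
      have hr : Fin.insertNth y (r y) (fun j => n' j + if j = x' then b' else 0) = r := by
        rw [hn'eq]
        exact Fin.insertNth_self_removeNth y r
      have h12 := hE2α (r y) n'
      rw [hr] at h12
      have h12u := hE2u (r y) n'
      rw [hr] at h12u
      have h13 : β - α x * ((b' : ℕ) : ℚ) - α y * ((r y : ℕ) : ℚ)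
          ≤ ∑ j, α₂ j * ((n' j : ℕ) : ℚ) := by
        linarith [h12, hβr]
      have h14 : x₀ + ∑ j, r j • u j
          = (x₀ + (b' • u x + (r y) • u y)) + ∑ j, n' j • u₂ j := by
        rw [h12u, ← add_assoc]
      have hzz : (x₀ + ∑ j, r j • u j) ∈ ⋃ i, S₂ ⟨r y, hry⟩ i := by
        rw [hun₂]
        exact ⟨n', h13, h14⟩
      obtain ⟨i, hi⟩ := Set.mem_iUnion.mp hzz
      refine ⟨Sum.inr ⟨⟨r y, hry⟩, i⟩, ?_⟩
      show _ ∈ NPar (p₂ ⟨r y, hry⟩ i) (Fin.snoc (g₂ ⟨r y, hry⟩ i) vV)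
      rw [hsnocMem]
      refine ⟨x₀ + ∑ j, r j • u j, k, ?_, ?_⟩
      · rw [hg₂eq] at hi; exact hi
      · rw [hsplitV, ← add_assoc]
  -- uniqueness of the (r, k) representation
  have huniq : ∀ (r₁ r₂ : Fin (m+1) → ℕ) (c₁ c₂ : ℕ),
      (r₁ x < b' ∨ (b' ≤ r₁ x ∧ r₁ y < a')) → (r₂ x < b' ∨ (b' ≤ r₂ x ∧ r₂ y < a')) →
      (∀ i, r₁ i + c₁ * w i = r₂ i + c₂ * w i) → c₁ = c₂ ∧ r₁ = r₂ := by
    intro r₁ r₂ c₁ c₂ h1 h2 heq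
    have hx1 := heq x
    rw [hwx] at hx1
    have hy1 := heq y
    rw [hwy] at hy1
    have hck : c₁ = c₂ := by
      rcases lt_trichotomy c₁ c₂ with hlt | heqk | hgt
      · exfalso
        have h4 : c₁ * b' ≤ c₂ * b' := Nat.mul_le_mul_right _ (le_of_lt hlt)
        have h5 : (c₂ - c₁) * b' = c₂ * b' - c₁ * b' := Nat.sub_mul _ _ _
        have h6 : b' ≤ (c₂ - c₁) * b' := Nat.le_mul_of_pos_left _ (by omega)
        have h4a : c₁ * a' ≤ c₂ * a' := Nat.mul_le_mul_right _ (le_of_lt hlt)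
        have h5a : (c₂ - c₁) * a' = c₂ * a' - c₁ * a' := Nat.sub_mul _ _ _
        have h6a : a' ≤ (c₂ - c₁) * a' := Nat.le_mul_of_pos_left _ (by omega)
        have hbx : b' ≤ r₁ x := by omega
        have hay : a' ≤ r₁ y := by omega
        rcases h1 with h | ⟨_, h⟩ <;> omega
      · exact heqk
      · exfalso
        have h4 : c₂ * b' ≤ c₁ * b' := Nat.mul_le_mul_right _ (le_of_lt hgt)
        have h5 : (c₁ - c₂) * b' = c₁ * b' - c₂ * b' := Nat.sub_mul _ _ _
        have h6 : b' ≤ (c₁ - c₂) * b' := Nat.le_mul_of_pos_left _ (by omega)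
        have h4a : c₂ * a' ≤ c₁ * a' := Nat.mul_le_mul_right _ (le_of_lt hgt)
        have h5a : (c₁ - c₂) * a' = c₁ * a' - c₂ * a' := Nat.sub_mul _ _ _
        have h6a : a' ≤ (c₁ - c₂) * a' := Nat.le_mul_of_pos_left _ (by omega)
        have hbx : b' ≤ r₂ x := by omega
        have hay : a' ≤ r₂ y := by omega
        rcases h2 with h | ⟨_, h⟩ <;> omega
    subst hck
    refine ⟨rfl, funext fun i => ?_⟩
    have := heq i
    omega
  -- the pieces are pieces
  have hQ : ∀ t : ι, IsPiece u (sets t) := by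
    intro t
    have hgen : ∀ (s : ℕ) (g : Fin s → V), LinearIndependent ℚ g →
        (∀ j, g j ∈ span ℚ (Set.range u₁) ∨ g j ∈ span ℚ (Set.range u₂)) → True := fun _ _ _ _ => trivial
    rcases t with ⟨c, i⟩ | ⟨d, i⟩
    · refine ⟨s₁ c i + 1, p₁ c i, Fin.snoc (g₁ c i) vV, ?_, ?_, rfl⟩
      · rw [linearIndependent_fin_snoc]
        refine ⟨hg₁ind c i, fun hmem => hvV₁ ?_⟩
        have hle : span ℚ (Set.range (g₁ c i)) ≤ span ℚ (Set.range u₁) := by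
          rw [span_le]
          rintro _ ⟨j, rfl⟩
          exact hg₁span c i j
        exact hle hmem
      · intro j
        refine Fin.lastCases ?_ ?_ j
        · rw [Fin.snoc_last]
          exact hvVspan
        · intro j'
          rw [Fin.snoc_castSucc]
          have h15 : span ℚ (Set.range u₁) ≤ span ℚ (Set.range u) := by
            apply span_mono
            rintro _ ⟨j'', rfl⟩
            exact ⟨x.succAbove j'', rfl⟩
          exact h15 (hg₁span c i j')
    · refine ⟨s₂ d i + 1, p₂ d i, Fin.snoc (g₂ d i) vV, ?_, ?_, rfl⟩
      · rw [linearIndependent_fin_snoc]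
        refine ⟨hg₂ind d i, fun hmem => hvV₂ ?_⟩
        have hle : span ℚ (Set.range (g₂ d i)) ≤ span ℚ (Set.range u₂) := by
          rw [span_le]
          rintro _ ⟨j, rfl⟩
          exact hg₂span d i j
        exact hle hmem
      · intro j
        refine Fin.lastCases ?_ ?_ j
        · rw [Fin.snoc_last]
          exact hvVspan
        · intro j'
          rw [Fin.snoc_castSucc]
          have h15 : span ℚ (Set.range u₂) ≤ span ℚ (Set.range u) := by
            apply span_mono
            rintro _ ⟨j'', rfl⟩
            exact ⟨y.succAbove j'', rfl⟩
          exact h15 (hg₂span d i j')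
  -- disjointness
  have hdis : ∀ t₁ t₂ : ι, t₁ ≠ t₂ → Disjoint (sets t₁) (sets t₂) := by
    intro t₁ t₂ hne
    rw [Set.disjoint_left]
    intro z hz1 hz2
    apply hne
    rcases t₁ with ⟨c1, i1⟩ | ⟨d1, i1⟩ <;> rcases t₂ with ⟨c2, i2⟩ | ⟨d2, i2⟩
    · obtain ⟨k1, r1, hr1x, hβ1, hzeq1, hmem1⟩ := hana₁ c1 i1 z hz1
      obtain ⟨k2, r2, hr2x, hβ2, hzeq2, hmem2⟩ := hana₁ c2 i2 z hz2
      have hfe : (fun j => r1 j + k1 * w j) = (fun j => r2 j + k2 * w j) :=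
        nat_comb_inj hu (add_left_cancel (hzeq1.symm.trans hzeq2))
      obtain ⟨hk, hr⟩ := huniq r1 r2 k1 k2 (Or.inl (hr1x ▸ c1.isLt)) (Or.inl (hr2x ▸ c2.isLt))
        (fun i => congrFun hfe i)
      subst hr
      have hcc : c1 = c2 := Fin.ext (by rw [← hr1x, ← hr2x])
      subst hcc
      have hii : i1 = i2 := by
        by_contra hii
        exact (Set.disjoint_left.mp (hdis₁ c1 i1 i2 hii)) hmem1 hmem2
      rw [hii]
    · obtain ⟨k1, r1, hr1x, hβ1, hzeq1, hmem1⟩ := hana₁ c1 i1 z hz1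
      obtain ⟨k2, r2, hr2x, hβ2, hzeq2, hmem2⟩ := hana₂ d2 i2 z hz2
      have hfe : (fun j => r1 j + k1 * w j) = (fun j => r2 j + k2 * w j) :=
        nat_comb_inj hu (add_left_cancel (hzeq1.symm.trans hzeq2))
      obtain ⟨hk, hr⟩ := huniq r1 r2 k1 k2 (Or.inl (hr1x ▸ c1.isLt))
        (Or.inr ⟨hr2x.1, hr2x.2 ▸ d2.isLt⟩) (fun i => congrFun hfe i)
      exfalso
      have h16 := hr1x
      have h17 := hr2x.1
      rw [hr] at h16
      have := c1.isLt
      omega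
    · obtain ⟨k1, r1, hr1x, hβ1, hzeq1, hmem1⟩ := hana₂ d1 i1 z hz1
      obtain ⟨k2, r2, hr2x, hβ2, hzeq2, hmem2⟩ := hana₁ c2 i2 z hz2
      have hfe : (fun j => r1 j + k1 * w j) = (fun j => r2 j + k2 * w j) :=
        nat_comb_inj hu (add_left_cancel (hzeq1.symm.trans hzeq2))
      obtain ⟨hk, hr⟩ := huniq r1 r2 k1 k2 (Or.inr ⟨hr1x.1, hr1x.2 ▸ d1.isLt⟩)
        (Or.inl (hr2x ▸ c2.isLt)) (fun i => congrFun hfe i)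
      exfalso
      have h16 := hr1x.1
      have h17 := hr2x
      rw [hr] at h16
      have := c2.isLt
      omega
    · obtain ⟨k1, r1, hr1x, hβ1, hzeq1, hmem1⟩ := hana₂ d1 i1 z hz1
      obtain ⟨k2, r2, hr2x, hβ2, hzeq2, hmem2⟩ := hana₂ d2 i2 z hz2
      have hfe : (fun j => r1 j + k1 * w j) = (fun j => r2 j + k2 * w j) :=
        nat_comb_inj hu (add_left_cancel (hzeq1.symm.trans hzeq2))
      obtain ⟨hk, hr⟩ := huniq r1 r2 k1 k2 (Or.inr ⟨hr1x.1, hr1x.2 ▸ d1.isLt⟩)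
        (Or.inr ⟨hr2x.1, hr2x.2 ▸ d2.isLt⟩) (fun i => congrFun hfe i)
      subst hr
      have hdd : d1 = d2 := Fin.ext (by rw [← hr1x.2, ← hr2x.2])
      subst hdd
      have hii : i1 = i2 := by
        by_contra hii
        exact (Set.disjoint_left.mp (hdis₂ d1 i1 i2 hii)) hmem1 hmem2
      rw [hii]
  -- the cover
  have hcover : ∀ (n : Fin (m+1) → ℕ), ∃ (r : Fin (m+1) → ℕ) (k : ℕ),
      (∀ i, n i = r i + k * w i) ∧ (r x < b' ∨ (b' ≤ r x ∧ r y < a')) ∧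
      (∑ j, α j * ((r j : ℕ) : ℚ)) = ∑ j, α j * ((n j : ℕ) : ℚ) := by
    intro n
    set k := min (n x / b') (n y / a') with hk
    set r : Fin (m+1) → ℕ := fun i => n i - k * w i with hrdef
    have hkb : k * b' ≤ n x := by
      have h1 : k ≤ n x / b' := min_le_left _ _
      calc k * b' ≤ (n x / b') * b' := Nat.mul_le_mul_right _ h1
      _ ≤ n x := Nat.div_mul_le_self _ _
    have hka : k * a' ≤ n y := by
      have h1 : k ≤ n y / a' := min_le_right _ _
      calc k * a' ≤ (n y / a') * a' := Nat.mul_le_mul_right _ h1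
      _ ≤ n y := Nat.div_mul_le_self _ _
    have hne : ∀ i, n i = r i + k * w i := by
      intro i
      rw [hrdef]
      dsimp only
      by_cases h1 : i = x
      · subst h1; rw [hwx]; omega
      · by_cases h2 : i = y
        · subst h2; rw [hwy]; omega
        · rw [hw0 i h1 h2]; omega
    refine ⟨r, k, hne, ?_, ?_⟩
    · have hrx : r x = n x - k * b' := by rw [hrdef]; dsimp only; rw [hwx]
      have hry : r y = n y - k * a' := by rw [hrdef]; dsimp only; rw [hwy]
      rcases le_total (n x / b') (n y / a') with h | h
      · left
        have hkeq : k = n x / b' := min_eq_left h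
        have hkb2 : k * b' = b' * (n x / b') := by rw [hkeq, Nat.mul_comm]
        have hmd := Nat.mod_add_div (n x) b'
        have hml := Nat.mod_lt (n x) hb'0
        rw [hrx]
        omega
      · by_cases hx2 : r x < b'
        · left; exact hx2
        · right
          refine ⟨le_of_not_gt hx2, ?_⟩
          have hkeq : k = n y / a' := min_eq_right h
          have hka2 : k * a' = a' * (n y / a') := by rw [hkeq, Nat.mul_comm]
          have hmd := Nat.mod_add_div (n y) a'
          have hml := Nat.mod_lt (n y) ha'0
          rw [hry]
          omega
    · rw [Finset.sum_congr rfl (fun j _ => by rw [hne j] :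
        ∀ j ∈ Finset.univ, α j * ((n j : ℕ) : ℚ) = α j * (((r j + k * w j : ℕ)) : ℚ))]
      exact (hsplitα r k).symm
  -- the union
  have hUnion : (⋃ t, sets t) = {z | ∃ n : Fin (m+1) → ℕ,
      (β ≤ ∑ j, α j * (n j : ℚ)) ∧ z = x₀ + ∑ j, n j • u j} := by
    ext z
    simp only [Set.mem_iUnion, Set.mem_setOf_eq]
    constructor
    · rintro ⟨t, ht⟩
      rcases t with ⟨c, i⟩ | ⟨d, i⟩
      · obtain ⟨k, r, hrx, hβr, hzeq, _⟩ := hana₁ c i z ht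
        refine ⟨fun j => r j + k * w j, ?_, hzeq⟩
        rw [hsplitα r k]
        exact hβr
      · obtain ⟨k, r, hrx, hβr, hzeq, _⟩ := hana₂ d i z ht
        refine ⟨fun j => r j + k * w j, ?_, hzeq⟩
        rw [hsplitα r k]
        exact hβr
    · rintro ⟨n, hβn, rfl⟩
      obtain ⟨r, k, hne, hB, hsum⟩ := hcover n
      have hβr : β ≤ ∑ j, α j * ((r j : ℕ) : ℚ) := by rw [hsum]; exact hβn
      obtain ⟨t, ht⟩ := hsyn r k hβr hB
      refine ⟨t, ?_⟩
      have hpt : x₀ + ∑ j, n j • u j = x₀ + ∑ j, (r j + k * w j) • u j := by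
        congr 1
        exact Finset.sum_congr rfl fun j _ => by rw [hne j]
      rw [hpt]
      exact ht
  rw [← hUnion]
  exact glue (IsPiece u) sets hQ hdis


theorem core : ∀ {m : ℕ} (x₀ : V) (u : Fin m → V), LinearIndependent ℚ u →
    ∀ (α : Fin m → ℚ) (β : ℚ),
    CoreOut u {x | ∃ n : Fin m → ℕ, (β ≤ ∑ j, α j * (n j : ℚ)) ∧ x = x₀ + ∑ j, n j • u j} := by
  intro m
  induction m with
  | zero =>
    intro x₀ u hu α β
    exact core_nonneg x₀ u hu α β (fun i => i.elim0)
  | succ m ih =>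
    intro x₀ u hu α β
    by_cases hP : ∀ i, 0 ≤ α i
    · exact core_nonneg x₀ u hu α β hP
    · by_cases hN : ∀ i, α i ≤ 0
      · exact core_nonpos x₀ u hu α β hN
      · push_neg at hP hN
        obtain ⟨y, hy⟩ := hP
        obtain ⟨x, hx⟩ := hN
        exact core_mixed x₀ u hu α β (fun y₀ v hv γ δ => ih y₀ v hv γ δ) x y hx hy

/-- decomposition statement for the final theorem -/
def SDecomp (A : Set V) : Prop :=
  ∃ (k : ℕ) (S : Fin k → Set V),
    (∀ i, IsSimpleSector (S i)) ∧
    (∀ i j, i ≠ j → Disjoint (S i) (S j)) ∧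
    (⋃ i, S i) = A

lemma lattice_decomp (x₀ : V) {m : ℕ} (e : Fin m → V) (he : LinearIndependent ℚ e) :
    SDecomp {x | ∃ a : Fin m → ℤ, x = x₀ + ∑ i, a i • e i} := by
  classical
  set sets : (Fin m → Bool) → Set V := fun ε =>
    NPar (x₀ + ∑ i, (if ε i then (0:ℤ) else -1) • e i) (fun i => if ε i then e i else -e i)
    with hsets
  have hmem : ∀ (ε : Fin m → Bool) (z : V), z ∈ sets ε ↔
      ∃ b : Fin m → ℤ, (∀ i, (0 ≤ b i ↔ ε i = true)) ∧ z = x₀ + ∑ i, b i • e i := by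
    intro ε z
    constructor
    · rintro ⟨a, rfl⟩
      refine ⟨fun i => if ε i then (a i : ℤ) else (-1 - a i), fun i => ?_, ?_⟩
      · by_cases h : ε i = true <;> simp [h] <;> omega
      · rw [add_assoc, ← Finset.sum_add_distrib]
        congr 1
        apply Finset.sum_congr rfl
        intro i _
        by_cases h : ε i = true
        · simp only [if_pos h]
          rw [zero_smul, zero_add, natCast_zsmul]
        · simp only [if_neg h]
          rw [smul_neg, ← natCast_zsmul, sub_smul, neg_smul, one_smul]
          abel
    · rintro ⟨b, hb, rfl⟩
      refine ⟨fun i => if ε i then (b i).toNat else (-1 - b i).toNat, ?_⟩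
      rw [add_assoc, ← Finset.sum_add_distrib]
      congr 1
      apply Finset.sum_congr rfl
      intro i _
      by_cases h : ε i = true
      · have h0 : 0 ≤ b i := (hb i).mpr h
        simp only [if_pos h]
        rw [zero_smul, zero_add, ← natCast_zsmul, Int.toNat_of_nonneg h0]
      · have h0 : ¬ 0 ≤ b i := fun hc => h ((hb i).mp hc)
        simp only [if_neg h]
        rw [smul_neg, ← natCast_zsmul, Int.toNat_of_nonneg (by omega : (0:ℤ) ≤ -1 - b i),
          sub_smul, neg_smul, one_smul]
        abel
  have hun : (⋃ ε, sets ε) = {x | ∃ a : Fin m → ℤ, x = x₀ + ∑ i, a i • e i} := by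
    ext z
    simp only [Set.mem_iUnion, Set.mem_setOf_eq]
    constructor
    · rintro ⟨ε, hz⟩
      obtain ⟨b, _, rfl⟩ := (hmem ε z).mp hz
      exact ⟨b, rfl⟩
    · rintro ⟨a, rfl⟩
      refine ⟨fun i => decide (0 ≤ a i), (hmem _ _).mpr ⟨a, fun i => ?_, rfl⟩⟩
      simp [decide_eq_true_eq]
  rw [← hun]
  apply glue
  · intro ε
    refine ⟨m, _, _, ?_, rfl⟩
    have h1 : (fun i => if ε i then e i else -e i)
        = (fun i => (if ε i then (1:ℚˣ) else -1) • e i) := by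
      funext i
      by_cases h : ε i = true <;> simp [h]
    rw [h1]
    exact he.units_smul _
  · intro ε₁ ε₂ hne
    rw [Set.disjoint_left]
    intro z hz1 hz2
    obtain ⟨b1, hs1, hz1⟩ := (hmem ε₁ z).mp hz1
    obtain ⟨b2, hs2, hz2⟩ := (hmem ε₂ z).mp hz2
    have hb : b1 = b2 := int_comb_inj he (add_left_cancel (hz1.symm.trans hz2))
    subst hb
    apply hne
    funext i
    have := (hs1 i).symm.trans (hs2 i)
    rcases Bool.eq_false_or_eq_true (ε₁ i) with h | h <;>
      rcases Bool.eq_false_or_eq_true (ε₂ i) with h' | h' <;> simp [h, h'] at this ⊢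
  -- done lattice

lemma step_halfspace (f : V →ₗ[ℚ] ℚ) (c : ℚ) (A : Set V) (hA : SDecomp A) :
    SDecomp (A ∩ {x | c ≤ f x}) := by
  classical
  obtain ⟨k, S, hS, hdis, hun⟩ := hA
  have h1 : ∀ i : Fin k, ∃ (k' : ℕ) (S' : Fin k' → Set V),
      (∀ j, IsSimpleSector (S' j)) ∧
      (∀ j₁ j₂, j₁ ≠ j₂ → Disjoint (S' j₁) (S' j₂)) ∧
      (⋃ j, S' j) = S i ∩ {x | c ≤ f x} := by
    intro i
    obtain ⟨s, p, g, hg, hSeq⟩ := hS i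
    obtain ⟨k', S', hP, hdis', hun'⟩ := core p g hg (fun j => f (g j)) (c - f p)
    refine ⟨k', S', fun j => ?_, hdis', ?_⟩
    · obtain ⟨s', p', g', hg', _, hSeq'⟩ := hP j
      exact ⟨s', p', g', hg', hSeq'⟩
    · rw [hun', hSeq]
      have hfval : ∀ n : Fin s → ℕ, f (p + ∑ j, n j • g j)
          = f p + ∑ j, (fun j => f (g j)) j * ((n j : ℕ) : ℚ) := by
        intro n
        rw [map_add, map_sum]
        congr 1
        apply Finset.sum_congr rfl
        intro j _
        rw [map_nsmul, nsmul_eq_mul]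
        ring
      ext z
      simp only [Set.mem_setOf_eq, Set.mem_inter_iff]
      constructor
      · rintro ⟨n, hβ, rfl⟩
        refine ⟨⟨n, rfl⟩, ?_⟩
        rw [hfval n]
        linarith [hβ]
      · rintro ⟨⟨n, rfl⟩, hc⟩
        refine ⟨n, ?_, rfl⟩
        rw [hfval n] at hc
        linarith [hc]
  choose k' S' hS' hdis' hun' using h1
  have hsub : ∀ (i : Fin k) (j : Fin (k' i)), S' i j ⊆ S i := by
    intro i j
    intro z hz
    have : z ∈ ⋃ j, S' i j := Set.mem_iUnion.mpr ⟨j, hz⟩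
    rw [hun' i] at this
    exact this.1
  have hDD : ∀ t₁ t₂ : (Σ i : Fin k, Fin (k' i)), t₁ ≠ t₂ →
      Disjoint (S' t₁.1 t₁.2) (S' t₂.1 t₂.2) := by
    rintro ⟨i₁, j₁⟩ ⟨i₂, j₂⟩ hne
    by_cases hii : i₁ = i₂
    · subst hii
      have hjj : j₁ ≠ j₂ := fun hc => hne (by rw [hc])
      exact hdis' i₁ j₁ j₂ hjj
    · exact Set.disjoint_of_subset (hsub i₁ j₁) (hsub i₂ j₂) (hdis i₁ i₂ hii)
  obtain ⟨K, T, hT, hTdis, hTun⟩ := glue (ι := Σ i : Fin k, Fin (k' i)) IsSimpleSector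
    (fun t => S' t.1 t.2) (fun t => hS' t.1 t.2) hDD
  refine ⟨K, T, hT, hTdis, ?_⟩
  rw [hTun]
  rw [Set.iUnion_sigma]
  calc (⋃ i, ⋃ j, S' i j) = ⋃ i, (S i ∩ {x | c ≤ f x}) := Set.iUnion_congr hun'
  _ = (⋃ i, S i) ∩ {x | c ≤ f x} := (Set.iUnion_inter _ _).symm
  _ = A ∩ {x | c ≤ f x} := by rw [hun]

lemma poly_fold (Λ : Set V) (hΛ : SDecomp Λ) :
    ∀ (k : ℕ) (f : Fin k → V →ₗ[ℚ] ℚ) (c : Fin k → ℚ),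
      SDecomp ({x | ∀ i, c i ≤ f i x} ∩ Λ) := by
  intro k
  induction k with
  | zero =>
    intro f c
    have : {x : V | ∀ i : Fin 0, c i ≤ f i x} ∩ Λ = Λ := by
      ext z; simp
    rw [this]
    exact hΛ
  | succ k ih =>
    intro f c
    have h1 := ih (fun i => f i.castSucc) (fun i => c i.castSucc)
    have h2 := step_halfspace (f (Fin.last k)) (c (Fin.last k)) _ h1
    have h3 : ({x | ∀ i : Fin k, c i.castSucc ≤ f i.castSucc x} ∩ Λ)
        ∩ {x | c (Fin.last k) ≤ f (Fin.last k) x}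
        = {x | ∀ i : Fin (k+1), c i ≤ f i x} ∩ Λ := by
      ext z
      simp only [Set.mem_inter_iff, Set.mem_setOf_eq]
      constructor
      · rintro ⟨⟨h4, h5⟩, h6⟩
        refine ⟨fun i => ?_, h5⟩
        refine Fin.lastCases ?_ ?_ i
        · exact h6
        · exact h4
      · rintro ⟨h4, h5⟩
        exact ⟨⟨fun i => h4 i.castSucc, h5⟩, h4 _⟩
    rw [h3] at h2
    exact h2

end SectorAux

/-- Every sector `C ∩ Λ` (with `C` a polytope and `Λ` a lattice) in a finite-dimensional
ℚ-vector space is a disjoint union of finitely many simple sectors. -/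
theorem sector_eq_disjoint_union_simple_sectors
    (V : Type*) [AddCommGroup V] [Module ℚ V] [FiniteDimensional ℚ V]
    (C Λ : Set V) (hC : IsPolytope C) (hΛ : IsLattice Λ) :
    ∃ (k : ℕ) (S : Fin k → Set V),
      (∀ i, IsSimpleSector (S i)) ∧
      (∀ i j, i ≠ j → Disjoint (S i) (S j)) ∧
      (⋃ i, S i) = C ∩ Λ := by
  obtain ⟨kC, f, c, hCeq⟩ := hC
  obtain ⟨m, x₀, e, he, hΛeq⟩ := hΛ
  have h0 : SectorAux.SDecomp Λ := by
    rw [hΛeq]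
    exact SectorAux.lattice_decomp x₀ e he
  have h1 := SectorAux.poly_fold Λ h0 kC f c
  rw [← hCeq] at h1
  exact h1
end

section
/- Let V be a finite-dimensional vector space over ℚ. Suppose x₀, e₁, …, e_m ∈ V with e₁, …, e_m linearly independent, and x₀′, e₁′, …, e_{m′}′ ∈ V with e₁′, …, e_{m′}′ linearly independent, define the same simple sector, i.e. {x₀ + ∑ᵢ aᵢeᵢ : aᵢ ∈ ℤ≥0} = {x₀′ + ∑ⱼ aⱼe′ⱼ : aⱼ ∈ ℤ≥0}. Then x₀ = x₀′, m = m′, and there is a permutation τ of {1, …, m} with e′ⱼ = e_{τ(j)} for all j; i.e. the data of a simple sector is determined by the underlying set up to a permutation of the generators. -/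
/-- The simple sector associated to a datum `(x₀; e₁, …, e_m)`:
the set `{x₀ + a₁e₁ + ⋯ + a_m e_m : aᵢ ∈ ℤ, aᵢ ≥ 0}`. -/
def simpleSector {V : Type*} [AddCommGroup V] [Module ℚ V] {m : ℕ}
    (x₀ : V) (e : Fin m → V) : Set V :=
  {y | ∃ a : Fin m → ℕ, y = x₀ + ∑ i, a i • e i}

/-!
Write `C(e)` for the additive monoid generated by the `eᵢ`, so that the sector is `x₀ + C(e)`.
Linear independence makes `C(e)` pointed (`w, -w ∈ C(e)` forces `w = 0`), and this pins down the
vertex: `w = x₀ - x₀'` satisfies `-w ∈ C(e)` and `w ∈ C(e')`, hence `x₀ + w = x₀' + 2w` lies in the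
sector and `w ∈ C(e)`. Once the vertices agree, `C(e) = C(e')`, and the generators are recovered
from the monoid alone as its indecomposable elements.
-/

open Set AddSubmonoid

namespace AddSubmonoid

variable {M : Type*} [AddMonoid M]

def IsIndecomposable (C : AddSubmonoid M) (v : M) : Prop :=
  v ∈ C ∧ v ≠ 0 ∧ ∀ p ∈ C, ∀ q ∈ C, v = p + q → p = 0 ∨ q = 0

theorem IsIndecomposable.mem_of_closure {S : Set M} {v : M}
    (hv : (closure S).IsIndecomposable v) : v ∈ S := by
  obtain ⟨hmem, hne, hdec⟩ := hv
  induction hmem using closure_induction with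
  | mem x hx => exact hx
  | zero => exact absurd rfl hne
  | add p q hp hq ihp ihq =>
    rcases hdec p hp q hq rfl with rfl | rfl
    · rw [zero_add] at hne hdec ⊢
      exact ihq hne hdec
    · rw [add_zero] at hne hdec ⊢
      exact ihp hne hdec

end AddSubmonoid

theorem Pi.eq_zero_or_eq_zero_of_add_eq_single_one {ι : Type*} [DecidableEq ι] {a b : ι → ℕ}
    {i : ι} (hab : a + b = Pi.single i 1) : a = 0 ∨ b = 0 := by
  have hcoord : ∀ j, a j + b j = if j = i then 1 else 0 := fun j => by
    simpa [Pi.single_apply] using congrFun hab j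
  have hoff : ∀ j ≠ i, a j = 0 ∧ b j = 0 := fun j hj => by simpa [hj] using hcoord j
  rcases Nat.add_eq_one_iff.mp (by simpa using hcoord i) with ⟨hai, -⟩ | ⟨-, hbi⟩
  · left
    funext j
    by_cases hj : j = i
    · exact hj ▸ hai
    · exact (hoff j hj).1
  · right
    funext j
    by_cases hj : j = i
    · exact hj ▸ hbi
    · exact (hoff j hj).2

section LinearIndependentNat

variable {V ι : Type*} [Fintype ι] {e : ι → V}

theorem LinearIndependent.eq_zero_of_mem_closure_range_of_neg_mem [AddCommGroup V]
    (he : LinearIndependent ℕ e) {w : V} (hw : w ∈ closure (range e))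
    (hw' : -w ∈ closure (range e)) : w = 0 := by
  obtain ⟨a, rfl⟩ := mem_closure_range_iff_of_fintype.mp hw
  obtain ⟨c, hc⟩ := mem_closure_range_iff_of_fintype.mp hw'
  have hac : ∑ i, (a + c) i • e i = ∑ i, (0 : ι → ℕ) i • e i := by
    simp [add_smul, Finset.sum_add_distrib, ← hc]
  have ha : a = 0 := funext fun i => by
    simpa using Nat.eq_zero_of_add_eq_zero_right (Fintype.linearIndependent_iffₛ.mp he _ _ hac i)
  simp [ha]

theorem LinearIndependent.setOf_isIndecomposable_closure_range [AddCommMonoid V]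
    (he : LinearIndependent ℕ e) : {v | (closure (range e)).IsIndecomposable v} = range e := by
  classical
  refine Subset.antisymm (fun v hv => hv.mem_of_closure) ?_
  rintro _ ⟨i, rfl⟩
  refine ⟨subset_closure ⟨i, rfl⟩, he.ne_zero i, fun p hp q hq hpq => ?_⟩
  obtain ⟨a, rfl⟩ := mem_closure_range_iff_of_fintype.mp hp
  obtain ⟨c, rfl⟩ := mem_closure_range_iff_of_fintype.mp hq
  have hac : a + c = Pi.single i 1 := funext <| Fintype.linearIndependent_iffₛ.mp he _ _ <| by
    simp [add_smul, Finset.sum_add_distrib, Pi.single_apply, ← hpq]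
  rcases Pi.eq_zero_or_eq_zero_of_add_eq_single_one hac with rfl | rfl <;> simp

end LinearIndependentNat

section Sector

variable {V : Type*} [AddCommGroup V] [Module ℚ V] {m m' : ℕ} {e : Fin m → V} {e' : Fin m' → V}
  {x₀ x₀' : V}

theorem mem_simpleSector_iff {y : V} :
    y ∈ simpleSector x₀ e ↔ y - x₀ ∈ closure (range e) := by
  simp only [simpleSector, mem_closure_range_iff_of_fintype, sub_eq_iff_eq_add']
  rfl

theorem self_mem_simpleSector : x₀ ∈ simpleSector x₀ e :=
  mem_simpleSector_iff.mpr (by simp)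

theorem eq_of_simpleSector_eq (he : LinearIndependent ℕ e)
    (h : simpleSector x₀ e = simpleSector x₀' e') : x₀ = x₀' := by
  have hw' : x₀ - x₀' ∈ closure (range e') :=
    mem_simpleSector_iff.mp (h ▸ self_mem_simpleSector)
  have hneg : -(x₀ - x₀') ∈ closure (range e) := by
    simpa using mem_simpleSector_iff.mp (h ▸ self_mem_simpleSector : x₀' ∈ simpleSector x₀ e)
  have hw : x₀ - x₀' ∈ closure (range e) := by
    have hmem : x₀ + (x₀ - x₀') ∈ simpleSector x₀ e :=
      h ▸ mem_simpleSector_iff.mpr (by convert add_mem hw' hw' using 1; abel)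
    simpa using mem_simpleSector_iff.mp hmem
  exact sub_eq_zero.mp (he.eq_zero_of_mem_closure_range_of_neg_mem hw hneg)

end Sector

theorem simpleSector_data_unique_general
    (V : Type*) [AddCommGroup V] [Module ℚ V]
    (m m' : ℕ) (x₀ x₀' : V) (e : Fin m → V) (e' : Fin m' → V)
    (he : LinearIndependent ℚ e) (he' : LinearIndependent ℚ e')
    (h : simpleSector x₀ e = simpleSector x₀' e') :
    x₀ = x₀' ∧ m = m' ∧ ∃ τ : Fin m' ≃ Fin m, ∀ j, e' j = e (τ j) := by
  have heℕ := he.restrict_scalars' ℕ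
  obtain rfl : x₀ = x₀' := eq_of_simpleSector_eq heℕ h
  have hcone : closure (range e) = closure (range e') := by
    ext v
    simpa [mem_simpleSector_iff] using Set.ext_iff.mp h (x₀ + v)
  have hrange : range e' = range e := by
    rw [← heℕ.setOf_isIndecomposable_closure_range,
      ← (he'.restrict_scalars' ℕ).setOf_isIndecomposable_closure_range, hcone]
  let τ : Fin m' ≃ Fin m := (Equiv.ofInjective e' he'.injective).trans
    ((Equiv.setCongr hrange).trans (Equiv.ofInjective e he.injective).symm)
  refine ⟨rfl, by simpa using Fintype.card_congr τ.symm, τ, fun j => ?_⟩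
  simp [τ, Equiv.apply_ofInjective_symm]

/-- If two simple-sector data `(x₀; e₁, …, e_m)` and `(x₀′; e₁′, …, e_{m′}′)` (with the
`eᵢ`, resp. the `e′ⱼ`, linearly independent) define the same simple sector, then
`x₀ = x₀′`, `m = m′`, and the `e′ⱼ` are a permutation of the `eᵢ`. -/
theorem simpleSector_data_unique
    (V : Type*) [AddCommGroup V] [Module ℚ V] [FiniteDimensional ℚ V]
    (m m' : ℕ) (x₀ x₀' : V) (e : Fin m → V) (e' : Fin m' → V)
    (he : LinearIndependent ℚ e) (he' : LinearIndependent ℚ e')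
    (h : simpleSector x₀ e = simpleSector x₀' e') :
    x₀ = x₀' ∧ m = m' ∧ ∃ τ : Fin m' ≃ Fin m, ∀ j, e' j = e (τ j) :=
  simpleSector_data_unique_general V m m' x₀ x₀' e e' he he' h
end

section
/- Let V be a finite-dimensional vector space over ℚ. Let (x₀⁽¹⁾; e₁⁽¹⁾, …) , …, (x₀⁽ᵏ⁾; e₁⁽ᵏ⁾, …) and (y₀⁽¹⁾; f₁⁽¹⁾, …), …, (y₀⁽ˡ⁾; f₁⁽ˡ⁾, …) be two finite families of simple-sector data in V such that the simple sectors in each family are pairwise disjoint and such that the union of the first family equals the union of the second family. Then in the fraction field ℚ(V) of the group algebra ℚ[V] one has ∑_{i=1}^{k} S(x₀⁽ⁱ⁾; e⁽ⁱ⁾) = ∑_{j=1}^{l} S(y₀⁽ʲ⁾; f⁽ʲ⁾). -/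
/-- The group algebra `ℚ[V]` of a ℚ-vector space `V` is an integral domain
(it has no zero divisors since `V` has unique sums, being torsion-free). -/
instance (V : Type*) [AddCommGroup V] [Module ℚ V] : IsDomain (AddMonoidAlgebra ℚ V) :=
  NoZeroDivisors.to_isDomain _

/-- The element `S(x₀; e) = e^{x₀} / ∏ᵢ (1 − e^{eᵢ})` of the fraction field `ℚ(V)`
of the group algebra `ℚ[V]` associated to a simple-sector datum `(x₀; e₁, …, e_m)`. -/
noncomputable def Sfrac {V : Type*} [AddCommGroup V] [Module ℚ V] {m : ℕ}
    (x₀ : V) (e : Fin m → V) : FractionRing (AddMonoidAlgebra ℚ V) :=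
  algebraMap (AddMonoidAlgebra ℚ V) (FractionRing (AddMonoidAlgebra ℚ V))
      (AddMonoidAlgebra.single x₀ 1) /
    ∏ i, (1 - algebraMap (AddMonoidAlgebra ℚ V) (FractionRing (AddMonoidAlgebra ℚ V))
      (AddMonoidAlgebra.single (e i) 1))

/-!
The group algebra `ℚ[V]` acts by convolution on all functions `V → ℚ`, extending its own
multiplication on finitely supported ones. Acting with `1 - e^{e₀}` on the indicator of the
sector `S(x₀; e₀, …, e_m)` leaves the indicator of `S(x₀; e₁, …, e_m)`, so the denominator
`∏ᵢ (1 - e^{eᵢ})` turns the indicator into the delta function at `x₀`, i.e. into `e^{x₀}`.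
Hence for a common multiple `D` of all denominators, `D · ∑ᵢ S(x⁽ⁱ⁾; e⁽ⁱ⁾)` lies in `ℚ[V]` and
its coefficient function is `D` acting on the indicator of the (disjoint) union of the sectors,
which only depends on the union.
-/

open AddMonoidAlgebra

section Convolution

variable {k G : Type*} [CommSemiring k] [AddCommGroup G]

noncomputable def translationHom : Multiplicative G →* Module.End k (G → k) where
  toFun u := LinearMap.funLeft k k (· - u.toAdd)
  map_one' := by ext; simp
  map_mul' u u' := by ext; simp [sub_sub]

noncomputable def convAction : k[G] →ₐ[k] Module.End k (G → k) :=
  lift k (Module.End k (G → k)) G translationHom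

theorem convAction_single (u : G) (c : k) (h : G → k) :
    convAction (single u c) h = fun v => c * h (v - u) := by
  ext; simp [convAction, translationHom]

theorem convAction_coeff (r s : k[G]) : convAction r ⇑s.coeff = ⇑(r * s).coeff := by
  induction r using AddMonoidAlgebra.induction_linear with
  | zero => simp
  | add r r' hr hr' => simp [hr, hr', add_mul]
  | single u c => ext v; simp [convAction_single, neg_add_eq_sub]

end Convolution

section SimpleSector

variable {V : Type*} [AddCommGroup V] [Module ℚ V] {m : ℕ}

theorem simpleSector_fin_zero (x₀ : V) (e : Fin 0 → V) : simpleSector x₀ e = {x₀} := by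
  ext v; simp [simpleSector]

theorem mem_simpleSector_succ_iff {x₀ v : V} {e : Fin (m + 1) → V} :
    v ∈ simpleSector x₀ e ↔
      v ∈ simpleSector x₀ (Fin.tail e) ∨ v - e 0 ∈ simpleSector x₀ e := by
  constructor
  · rintro ⟨a, rfl⟩
    rcases h : a 0 with _ | c
    · left
      exact ⟨Fin.tail a, by simp [Fin.sum_univ_succ, h, Fin.tail]⟩
    · right
      refine ⟨Fin.cons c (Fin.tail a), ?_⟩
      simp only [Fin.sum_univ_succ, h, succ_nsmul, Fin.cons_zero, Fin.cons_succ, Fin.tail]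
      abel
  · rintro (⟨c, rfl⟩ | ⟨b, hb⟩)
    · exact ⟨Fin.cons 0 c, by simp [Fin.sum_univ_succ, Fin.tail]⟩
    · refine ⟨Fin.cons (b 0 + 1) (Fin.tail b), ?_⟩
      rw [sub_eq_iff_eq_add] at hb
      simp only [hb, Fin.sum_univ_succ, Fin.cons_zero, succ_nsmul, Fin.cons_succ, Fin.tail]
      abel

theorem LinearIndependent.sum_nsmul_injective {e : Fin m → V} (he : LinearIndependent ℚ e) :
    Function.Injective fun a : Fin m → ℕ => ∑ i, a i • e i := by
  intro a b hab
  have := Fintype.linearIndependent_iffₛ.mp he (fun i => (a i : ℚ)) (fun i => (b i : ℚ))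
    (by simpa [Nat.cast_smul_eq_nsmul] using hab)
  exact funext fun i => by exact_mod_cast this i

theorem notMem_simpleSector_tail_of_sub_mem {x₀ v : V} {e : Fin (m + 1) → V}
    (he : LinearIndependent ℚ e) (hv : v - e 0 ∈ simpleSector x₀ e) :
    v ∉ simpleSector x₀ (Fin.tail e) := by
  rintro ⟨c, rfl⟩
  obtain ⟨b, hb⟩ := hv
  have := congrFun (he.sum_nsmul_injective (a₁ := Fin.cons (b 0 + 1) (Fin.tail b))
    (a₂ := Fin.cons 0 c) ?_) 0
  · simp at this
  · rw [sub_eq_iff_eq_add, add_assoc, add_right_inj] at hb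
    simp only [Fin.sum_univ_succ, Fin.tail, Fin.cons_zero, Fin.cons_succ, succ_nsmul,
      zero_smul, zero_add] at hb ⊢
    rw [hb]
    abel

end SimpleSector

section SectorDenominator

variable {V : Type*} [AddCommGroup V] [Module ℚ V] {m : ℕ}

noncomputable def sectorDenom (e : Fin m → V) : ℚ[V] := ∏ i, (1 - single (e i) 1)

theorem sectorDenom_ne_zero {e : Fin m → V} (he : LinearIndependent ℚ e) : sectorDenom e ≠ 0 :=
  Finset.prod_ne_zero_iff.2 fun i _ => sub_ne_zero.2 <| by
    rw [one_def, ne_eq, single_left_inj one_ne_zero]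
    exact (he.ne_zero i).symm

theorem convAction_one_sub_single_indicator {x₀ : V} {e : Fin (m + 1) → V}
    (he : LinearIndependent ℚ e) :
    convAction (1 - single (e 0) 1 : ℚ[V]) ((simpleSector x₀ e).indicator 1) =
      (simpleSector x₀ (Fin.tail e)).indicator 1 := by
  classical
  ext v
  simp only [map_sub, map_one, LinearMap.sub_apply, Module.End.one_apply, convAction_single,
    Pi.sub_apply, one_mul, Set.indicator_apply, Pi.one_apply]
  by_cases hsub : v - e 0 ∈ simpleSector x₀ e
  · simp [hsub, mem_simpleSector_succ_iff.2 (Or.inr hsub),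
      notMem_simpleSector_tail_of_sub_mem he hsub]
  · simp [hsub, mem_simpleSector_succ_iff (v := v)]

theorem convAction_sectorDenom_indicator (x₀ : V) {e : Fin m → V}
    (he : LinearIndependent ℚ e) :
    convAction (sectorDenom e) ((simpleSector x₀ e).indicator 1) = ⇑(single x₀ (1 : ℚ)).coeff := by
  induction m with
  | zero =>
    rw [sectorDenom, Fin.prod_univ_zero, map_one, Module.End.one_apply, simpleSector_fin_zero,
      coeff_single, Finsupp.set_indicator_singleton]
    rfl
  | succ m ih =>
    rw [sectorDenom, Fin.prod_univ_succ, mul_comm, map_mul, Module.End.mul_apply,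
      convAction_one_sub_single_indicator he]
    exact ih (he.comp Fin.succ (Fin.succ_injective m))

theorem coeff_single_mul_eq_convAction_indicator (x₀ : V) {e : Fin m → V}
    (he : LinearIndependent ℚ e) (t : ℚ[V]) :
    ⇑(single x₀ (1 : ℚ) * t).coeff =
      convAction (sectorDenom e * t) ((simpleSector x₀ e).indicator 1) := by
  rw [mul_comm (sectorDenom e), map_mul, Module.End.mul_apply,
    convAction_sectorDenom_indicator x₀ he, convAction_coeff, mul_comm]

theorem Sfrac_eq_div (x₀ : V) (e : Fin m → V) :
    Sfrac x₀ e = algebraMap ℚ[V] (FractionRing ℚ[V]) (single x₀ 1) /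
      algebraMap ℚ[V] (FractionRing ℚ[V]) (sectorDenom e) := by
  simp [Sfrac, sectorDenom, map_prod]

theorem Sfrac_mul_algebraMap (x₀ : V) {e : Fin m → V} (he : LinearIndependent ℚ e) (t : ℚ[V]) :
    Sfrac x₀ e * algebraMap ℚ[V] (FractionRing ℚ[V]) (sectorDenom e * t) =
      algebraMap ℚ[V] (FractionRing ℚ[V]) (single x₀ 1 * t) := by
  have hQ : algebraMap ℚ[V] (FractionRing ℚ[V]) (sectorDenom e) ≠ 0 :=
    (map_ne_zero_iff _ (IsFractionRing.injective _ _)).2 (sectorDenom_ne_zero he)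
  rw [Sfrac_eq_div, map_mul, map_mul]
  field_simp

theorem exists_sum_Sfrac_mul_eq {ι : Type*} [Fintype ι] (x : ι → V) {n : ι → ℕ}
    (e : (i : ι) → Fin (n i) → V) (he : ∀ i, LinearIndependent ℚ (e i))
    (hd : Pairwise (Function.onFun Disjoint fun i => simpleSector (x i) (e i)))
    (D : ℚ[V]) (hD : ∀ i, sectorDenom (e i) ∣ D) :
    ∃ N : ℚ[V], (∑ i, Sfrac (x i) (e i)) * algebraMap ℚ[V] (FractionRing ℚ[V]) D =
        algebraMap ℚ[V] (FractionRing ℚ[V]) N ∧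
      ⇑N.coeff = convAction D ((⋃ i, simpleSector (x i) (e i)).indicator 1) := by
  choose t ht using hD
  refine ⟨∑ i, single (x i) 1 * t i, ?_, ?_⟩
  · rw [Finset.sum_mul, map_sum]
    refine Finset.sum_congr rfl fun i _ => ?_
    rw [ht i, Sfrac_mul_algebraMap (x i) (he i)]
  · have hunion : (⋃ i, simpleSector (x i) (e i)).indicator (1 : V → ℚ) =
        ∑ i, (simpleSector (x i) (e i)).indicator 1 := by
      ext v
      simpa using Finset.indicator_biUnion_apply Finset.univ _ (hd.set_pairwise _) v
    rw [hunion, map_sum, coeff_sum, Finsupp.coe_finsetSum]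
    refine Finset.sum_congr rfl fun i _ => ?_
    rw [coeff_single_mul_eq_convAction_indicator (x i) (he i), ← ht i]

end SectorDenominator

theorem Sfrac_sum_eq_of_union_eq_general
    (V : Type*) [AddCommGroup V] [Module ℚ V]
    (k l : ℕ) (x : Fin k → V) (n : Fin k → ℕ) (e : (i : Fin k) → Fin (n i) → V)
    (y : Fin l → V) (p : Fin l → ℕ) (f : (j : Fin l) → Fin (p j) → V)
    (he : ∀ i, LinearIndependent ℚ (e i)) (hf : ∀ j, LinearIndependent ℚ (f j))
    (hdx : ∀ i i', i ≠ i' → Disjoint (simpleSector (x i) (e i)) (simpleSector (x i') (e i')))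
    (hdy : ∀ j j', j ≠ j' → Disjoint (simpleSector (y j) (f j)) (simpleSector (y j') (f j')))
    (hunion : (⋃ i, simpleSector (x i) (e i)) = ⋃ j, simpleSector (y j) (f j)) :
    ∑ i, Sfrac (x i) (e i) = ∑ j, Sfrac (y j) (f j) := by
  let D := (∏ i, sectorDenom (e i)) * ∏ j, sectorDenom (f j)
  have hD : D ≠ 0 := mul_ne_zero (Finset.prod_ne_zero_iff.2 fun i _ => sectorDenom_ne_zero (he i))
    (Finset.prod_ne_zero_iff.2 fun j _ => sectorDenom_ne_zero (hf j))
  obtain ⟨N, hN, hNcoeff⟩ := exists_sum_Sfrac_mul_eq x e he hdx D fun i =>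
    (Finset.dvd_prod_of_mem _ (Finset.mem_univ i)).mul_right _
  obtain ⟨M, hM, hMcoeff⟩ := exists_sum_Sfrac_mul_eq y f hf hdy D fun j =>
    (Finset.dvd_prod_of_mem _ (Finset.mem_univ j)).mul_left _
  have hNM : N = M := coeff_injective <| DFunLike.coe_injective <| by rw [hNcoeff, hMcoeff, hunion]
  refine mul_right_cancel₀ ((map_ne_zero_iff _ (IsFractionRing.injective _ _)).2 hD) ?_
  rw [hN, hM, hNM]

/-- If two finite pairwise-disjoint families of simple sectors in a finite-dimensional
ℚ-vector space `V` have the same union, then the corresponding sums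
`∑ᵢ S(x₀⁽ⁱ⁾; e⁽ⁱ⁾)` agree in the fraction field `ℚ(V)` of the group algebra `ℚ[V]`. -/
theorem Sfrac_sum_eq_of_union_eq
    (V : Type*) [AddCommGroup V] [Module ℚ V] [FiniteDimensional ℚ V]
    (k l : ℕ) (x : Fin k → V) (n : Fin k → ℕ) (e : (i : Fin k) → Fin (n i) → V)
    (y : Fin l → V) (p : Fin l → ℕ) (f : (j : Fin l) → Fin (p j) → V)
    (he : ∀ i, LinearIndependent ℚ (e i)) (hf : ∀ j, LinearIndependent ℚ (f j))
    (hdx : ∀ i i', i ≠ i' → Disjoint (simpleSector (x i) (e i)) (simpleSector (x i') (e i')))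
    (hdy : ∀ j j', j ≠ j' → Disjoint (simpleSector (y j) (f j)) (simpleSector (y j') (f j')))
    (hunion : (⋃ i, simpleSector (x i) (e i)) = ⋃ j, simpleSector (y j) (f j)) :
    ∑ i, Sfrac (x i) (e i) = ∑ j, Sfrac (y j) (f j) :=
  Sfrac_sum_eq_of_union_eq_general V k l x n e y p f he hf hdx hdy hunion
end

section
/- Let M be a vector space over ℚ, let r ∈ ℚ be nonzero, and let D, ∂ : M → M be ℚ-linear maps satisfying ∂ ∘ D − D ∘ ∂ = r · id_M. Assume ∂ is locally nilpotent, i.e. for every q ∈ M there exists N with ∂^N q = 0. For p ∈ M define ξ(p) = ∑_{i ≥ 0} (1/(i! · (−r)^i)) · D^i(∂^i p) (a finite sum by local nilpotency). Then: (1) ∂(ξ(p)) = 0; (2) ξ(p) − p lies in the range of D; and (3) if in addition (range D) ∩ (kernel ∂) = {0}, then ξ(p) is the unique element of the coset p + range(D) that lies in the kernel of ∂. -/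
/-- Let `M` be a ℚ-vector space, `r ∈ ℚ` nonzero, and `D, ∂ : M → M` linear maps with
`∂∘D − D∘∂ = r·id`, with `∂` locally nilpotent. For
`ξ(p) = ∑_{i≥0} (1/(i!·(−r)^i)) · Dⁱ(∂ⁱ p)` (a finite sum):
(1) `∂(ξ(p)) = 0`; (2) `ξ(p) − p ∈ range D`; and (3) if moreover
`range D ∩ ker ∂ = 0`, then `ξ(p)` is the unique element of `p + range D` killed by `∂`. -/
theorem xi_canonical_representative
    (M : Type*) [AddCommGroup M] [Module ℚ M] (r : ℚ) (hr : r ≠ 0)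
    (D pd : M →ₗ[ℚ] M)
    (hcomm : pd ∘ₗ D - D ∘ₗ pd = r • (LinearMap.id : M →ₗ[ℚ] M))
    (hnil : ∀ q : M, ∃ N : ℕ, (pd ^ N) q = 0) :
    ∀ p : M,
      (pd (∑ᶠ i : ℕ, ((1 : ℚ) / (Nat.factorial i * (-r) ^ i)) • (D ^ i) ((pd ^ i) p)) = 0) ∧
      ((∑ᶠ i : ℕ, ((1 : ℚ) / (Nat.factorial i * (-r) ^ i)) • (D ^ i) ((pd ^ i) p)) - p
        ∈ LinearMap.range D) ∧
      (LinearMap.range D ⊓ LinearMap.ker pd = ⊥ →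
        ∀ q : M, (q - p) ∈ LinearMap.range D → pd q = 0 →
          q = ∑ᶠ i : ℕ, ((1 : ℚ) / (Nat.factorial i * (-r) ^ i)) • (D ^ i) ((pd ^ i) p)) := by
  intro p
  obtain ⟨N, hN⟩ := hnil p
  set F : ℕ → M := fun i => ((1 : ℚ) / (Nat.factorial i * (-r) ^ i)) • (D ^ i) ((pd ^ i) p)
    with hF
  -- pd^i p = 0 for i ≥ N
  have hvanish : ∀ i, N ≤ i → (pd ^ i) p = 0 := by
    intro i hi
    obtain ⟨k, rfl⟩ := Nat.exists_eq_add_of_le hi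
    rw [add_comm, pow_add, Module.End.mul_apply, hN, map_zero]
  have hsupp : Function.support F ⊆ ↑(Finset.range (N + 1)) := by
    intro i hi
    simp only [Finset.coe_range, Set.mem_Iio]
    by_contra h
    apply hi
    have : (pd ^ i) p = 0 := hvanish i (by omega)
    simp [hF, this]
  have hsum : (∑ᶠ i : ℕ, F i) = ∑ i ∈ Finset.range (N + 1), F i :=
    finsum_eq_sum_of_support_subset F hsupp
  -- pointwise commutator
  have hcomm' : ∀ x : M, pd (D x) = D (pd x) + r • x := by
    intro x
    have := LinearMap.ext_iff.mp hcomm x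
    simp only [LinearMap.sub_apply, LinearMap.comp_apply, LinearMap.smul_apply,
      LinearMap.id_apply] at this
    linear_combination (norm := module) this
  have hpow : ∀ (n : ℕ) (x : M),
      pd ((D ^ (n + 1)) x) = (D ^ (n + 1)) (pd x) + (((n : ℚ) + 1) * r) • (D ^ n) x := by
    intro n
    induction n with
    | zero => intro x; simp [hcomm' x]
    | succ n ih =>
      intro x
      have h1 : (D ^ (n + 2)) x = (D ^ (n + 1)) (D x) := by
        rw [pow_succ, Module.End.mul_apply]
      have h2 : (D ^ (n + 1)) x = (D ^ n) (D x) := by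
        rw [pow_succ, Module.End.mul_apply]
      rw [h1, ih (D x), hcomm' x, map_add, map_smul, ← Module.End.mul_apply, ← pow_succ,
        ← h2]
      module
  -- scalar identity
  have hc : ∀ i : ℕ,
      ((1 : ℚ) / (Nat.factorial (i + 1) * (-r) ^ (i + 1))) * (((i : ℚ) + 1) * r)
        = -((1 : ℚ) / (Nat.factorial i * (-r) ^ i)) := by
    intro i
    have h1 : ((Nat.factorial i : ℚ)) ≠ 0 := Nat.cast_ne_zero.mpr (Nat.factorial_ne_zero i)
    have h2 : (-r : ℚ) ≠ 0 := neg_ne_zero.mpr hr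
    have h3 : ((i : ℚ) + 1) ≠ 0 := by positivity
    rw [Nat.factorial_succ]
    push_cast
    field_simp
    ring
  -- telescoping function
  set G : ℕ → M := fun i => match i with
    | 0 => 0
    | (i + 1) => ((1 : ℚ) / (Nat.factorial i * (-r) ^ i)) • (D ^ i) ((pd ^ (i + 1)) p)
    with hG
  have hpdF : ∀ i, pd (F i) = G (i + 1) - G i := by
    intro i
    match i with
    | 0 => simp [hF, hG, pow_zero, pow_one]
    | (i + 1) =>
      have hstep : pd ((pd ^ (i + 1)) p) = (pd ^ (i + 1 + 1)) p := by
        rw [← Module.End.mul_apply, ← pow_succ']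
      simp only [hF, hG, map_smul, hpow i ((pd ^ (i + 1)) p), smul_add, smul_smul, hc i,
        hstep]
      module
  have hGtop : G (N + 1) = 0 := by
    have : (pd ^ (N + 1)) p = 0 := hvanish (N + 1) (by omega)
    simp [hG, this]
  -- Part 1
  have part1 : pd (∑ᶠ i : ℕ, F i) = 0 := by
    rw [hsum, map_sum]
    calc (∑ i ∈ Finset.range (N + 1), pd (F i))
        = ∑ i ∈ Finset.range (N + 1), (G (i + 1) - G i) :=
          Finset.sum_congr rfl fun i _ => hpdF i
      _ = G (N + 1) - G 0 := Finset.sum_range_sub G (N + 1)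
      _ = 0 := by rw [hGtop]; simp [hG]
  -- Part 2
  have hF0 : F 0 = p := by simp [hF]
  have part2 : (∑ᶠ i : ℕ, F i) - p ∈ LinearMap.range D := by
    rw [hsum, Finset.sum_range_succ' F N, hF0, add_sub_cancel_right]
    refine ⟨∑ i ∈ Finset.range N,
      ((1 : ℚ) / (Nat.factorial (i + 1) * (-r) ^ (i + 1))) • (D ^ i) ((pd ^ (i + 1)) p), ?_⟩
    rw [map_sum]
    refine Finset.sum_congr rfl fun i _ => ?_
    rw [map_smul, hF]
    congr 1
    rw [← Module.End.mul_apply, ← pow_succ']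
  refine ⟨part1, part2, ?_⟩
  intro hb q hq hpq
  have h1 : q - (∑ᶠ i : ℕ, F i) ∈ LinearMap.range D := by
    have := Submodule.sub_mem _ hq part2
    simpa using this
  have h2 : q - (∑ᶠ i : ℕ, F i) ∈ LinearMap.ker pd := by
    rw [LinearMap.mem_ker, map_sub, hpq, part1, sub_zero]
  have : q - (∑ᶠ i : ℕ, F i) ∈ LinearMap.range D ⊓ LinearMap.ker pd := ⟨h1, h2⟩
  rw [hb, Submodule.mem_bot] at this
  exact sub_eq_zero.mp this
end

section
/- For every integer n ≥ 1: ∑_{m=1}^{n} ((−1)^m · B_m / m!) · ∑_{(c₁,…,c_m)} ∏_{j=1}^{m} (1/c_j) = 1/(n+1), where the inner sum is over all compositions (c₁, …, c_m) of n of length m, and B_m is the m-th Bernoulli number with the convention B₁ = −1/2. -/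
/-!
Put `ℓ = -log (1 - x) = ∑ xʲ / j`. The inner sum is the coefficient of `xⁿ` in `ℓᵐ`, so the
left-hand side is the `xⁿ`-coefficient of `B(-ℓ)`, where `B(t) = ∑ Bₘ tᵐ / m! = t / (eᵗ - 1)`.
Since `e^{-ℓ} = 1 - x`, we get `B(-ℓ) = ℓ / x`, whose `xⁿ`-coefficient is `1 / (n + 1)`.
-/

open Finset

theorem List.ofFn_getD_of_length_eq {α : Type*} {l : List α} {m : ℕ} (h : l.length = m) (d : α) :
    List.ofFn (fun i : Fin m => l.getD i d) = l := by
  subst h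
  simp

namespace PowerSeries

theorem coeff_pow_eq_sum_compositions {R : Type*} [CommSemiring R] {f : R⟦X⟧}
    (hf : constantCoeff f = 0) (n m : ℕ) :
    coeff n (f ^ m) = ∑ c ∈ univ.filter (fun c : Composition n => c.length = m),
      (c.blocks.map fun j => coeff j f).prod := by
  classical
  -- A composition of length `m` is an `m`-tuple of positive parts; tuples with a zero part
  -- contribute nothing because `f` has no constant term.
  have hblocks (c : Composition n) (hc : c.length = m) :
      List.ofFn (fun i : Fin m => c.blocks.getD i 0) = c.blocks := List.ofFn_getD_of_length_eq hc 0
  rw [show f ^ m = ∏ _i : Fin m, f by simp, coeff_prod]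
  symm
  refine sum_of_injOn (fun c => Finsupp.equivFunOnFinite.symm fun i : Fin m => c.blocks.getD i 0)
    ?inj ?maps ?zero ?val
  case inj =>
    intro c hc c' hc' he
    simp only [coe_filter, mem_univ, true_and, Set.mem_ofPred_eq] at hc hc'
    apply Composition.ext
    rw [← hblocks c hc, ← hblocks c' hc']
    exact congrArg List.ofFn (Finsupp.equivFunOnFinite.symm.injective he)
  case maps =>
    intro c hc
    simp only [coe_filter, mem_univ, true_and, Set.mem_ofPred_eq] at hc
    rw [mem_coe, mem_finsuppAntidiag]
    refine ⟨?_, subset_univ _⟩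
    have hsum := congrArg List.sum (hblocks c hc)
    rw [List.sum_ofFn, c.blocks_sum] at hsum
    simpa using hsum
  case zero =>
    intro l hl_mem hl
    by_contra hprod
    have hpos (i : Fin m) : l i ≠ 0 := fun hi =>
      hprod (prod_eq_zero (mem_univ i) (by simp [hi, hf]))
    let c : Composition n :=
      ⟨List.ofFn fun i => l i, by simpa [List.mem_ofFn, Nat.pos_iff_ne_zero] using hpos,
        by simpa [List.sum_ofFn, mem_finsuppAntidiag] using hl_mem⟩
    exact hl ⟨c, by simp [c, Composition.length], by ext i; simp [c]⟩
  case val =>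
    intro c hc
    simp only [mem_filter, mem_univ, true_and] at hc
    conv_lhs => rw [← hblocks c hc]
    simp [List.map_ofFn, List.prod_ofFn]

theorem coeff_subst_eq_sum_range {R : Type*} [CommRing R] {f g : R⟦X⟧}
    (hg : constantCoeff g = 0) (n : ℕ) :
    coeff n (f.subst g) = ∑ m ∈ range (n + 1), coeff m f * coeff n (g ^ m) := by
  rw [coeff_subst' (HasSubst.of_constantCoeff_zero' hg)]
  refine finsum_eq_finsetSum_of_support_subset _ fun m hm => ?_
  rw [mem_coe, mem_range, Nat.lt_succ_iff]
  by_contra hnm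
  refine hm ?_
  have : X ^ m ∣ g ^ m := pow_dvd_pow_of_dvd (X_dvd_iff.mpr hg) m
  simp [X_pow_dvd_iff.mp this n (by omega)]

theorem coeff_neg_pow {R : Type*} [CommRing R] (f : R⟦X⟧) (m n : ℕ) :
    coeff n ((-f) ^ m) = (-1) ^ m * coeff n (f ^ m) := by
  rw [neg_pow, ← map_one C, ← map_neg, ← map_pow, coeff_C_mul]

theorem derivative_mk_one (R : Type*) [CommRing R] :
    d⁄dX R (mk 1) = mk 1 ^ 2 := by
  have h := congrArg (d⁄dX R) (mk_one_mul_one_sub_eq_one R)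
  simp only [Derivation.leibniz, map_sub, derivative_X, Derivation.map_one_eq_zero,
    smul_eq_mul] at h
  calc d⁄dX R (mk 1) = d⁄dX R (mk 1) * ((1 - X) * mk 1) := by
        rw [mul_comm (1 - X), mk_one_mul_one_sub_eq_one, mul_one]
    _ = mk 1 ^ 2 := by linear_combination (mk 1 : R⟦X⟧) * h

variable (K : Type*) [Field K]

/-- `-log (1 - X) = ∑ Xⁿ / n`; the constant coefficient is `(0 : K)⁻¹ = 0`. -/
noncomputable def negLogOneSub : K⟦X⟧ := mk fun n => (n : K)⁻¹

variable {K}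

theorem coeff_negLogOneSub (n : ℕ) : coeff n (negLogOneSub K) = (n : K)⁻¹ := coeff_mk _ _

theorem constantCoeff_negLogOneSub : constantCoeff (negLogOneSub K) = 0 := by
  rw [← coeff_zero_eq_constantCoeff_apply, coeff_negLogOneSub, Nat.cast_zero, inv_zero]

theorem constantCoeff_neg_negLogOneSub : constantCoeff (-negLogOneSub K) = 0 := by
  rw [map_neg, constantCoeff_negLogOneSub, neg_zero]

theorem derivative_negLogOneSub [CharZero K] : d⁄dX K (negLogOneSub K) = mk 1 := by
  ext n
  rw [coeff_derivative, coeff_negLogOneSub, coeff_mk, Pi.one_apply, Nat.cast_succ,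
    inv_mul_cancel₀ (Nat.cast_add_one_ne_zero n)]

theorem exp_subst_neg_negLogOneSub [CharZero K] : (exp K).subst (-negLogOneSub K) = 1 - X := by
  set E := (exp K).subst (-negLogOneSub K)
  have hE : d⁄dX K E = -(E * mk 1) := by
    rw [derivative_subst (HasSubst.of_constantCoeff_zero' constantCoeff_neg_negLogOneSub),
      derivative_exp, map_neg, derivative_negLogOneSub, mul_neg]
  -- `mk 1 = (1 - X)⁻¹`, and `E * mk 1` has derivative `-E (mk 1)² + E (mk 1)² = 0`.
  have hconst : E * mk 1 = 1 := by
    refine derivative.ext ?_ ?_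
    · rw [Derivation.leibniz, hE, derivative_mk_one, Derivation.map_one_eq_zero, smul_eq_mul,
        smul_eq_mul]
      ring
    · rw [map_mul, ← coeff_zero_eq_constantCoeff_apply,
        coeff_subst_eq_sum_range constantCoeff_neg_negLogOneSub]
      simp
  calc E = E * mk 1 * (1 - X) := by rw [mul_assoc, mk_one_mul_one_sub_eq_one, mul_one]
    _ = 1 - X := by rw [hconst, one_mul]

theorem bernoulliPowerSeries_subst_neg_negLogOneSub_mul_X [CharZero K] :
    (bernoulliPowerSeries K).subst (-negLogOneSub K) * X = negLogOneSub K := by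
  have hsubst := HasSubst.of_constantCoeff_zero' (constantCoeff_neg_negLogOneSub (K := K))
  have h := congrArg (substAlgHom hsubst) (bernoulliPowerSeries_mul_exp_sub_one K)
  rw [map_mul, map_sub, map_one, substAlgHom_X, coe_substAlgHom, exp_subst_neg_negLogOneSub] at h
  linear_combination -h

end PowerSeries

open PowerSeries

theorem sum_compositions_prod_one_div_eq_coeff_negLogOneSub_pow (n m : ℕ) :
    ∑ c ∈ univ.filter (fun c : Composition n => c.length = m),
      (c.blocks.map (fun j => (1 : ℚ) / (j : ℚ))).prod = coeff n (negLogOneSub ℚ ^ m) := by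
  -- `c.blocks` is coerced to `List ℚ` through the list monad
  simp only [coeff_pow_eq_sum_compositions constantCoeff_negLogOneSub, coeff_negLogOneSub, one_div,
    List.pure_def, List.bind_eq_flatMap, ← List.map_eq_flatMap, List.map_map, Function.comp_def]

/-- For every `n ≥ 1`:
`∑_{m=1}^{n} ((−1)^m · B_m / m!) · ∑_{(c₁,…,c_m)} ∏_j (1/c_j) = 1/(n+1)`, the inner sum
being over all compositions `(c₁, …, c_m)` of `n` of length `m`, where `B_m` is the `m`-th
Bernoulli number with the convention `B₁ = −1/2` (Mathlib's `bernoulli`). -/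
theorem composition_bernoulli_sum (n : ℕ) (hn : 1 ≤ n) :
    ∑ m ∈ Finset.Icc 1 n, ((-1 : ℚ) ^ m * bernoulli m / (Nat.factorial m : ℚ)) *
      ∑ c ∈ Finset.univ.filter (fun c : Composition n => c.length = m),
        (c.blocks.map (fun j => (1 : ℚ) / (j : ℚ))).prod = 1 / (n + 1 : ℚ) := by
  have hterm (m : ℕ) : ((-1 : ℚ) ^ m * bernoulli m / (Nat.factorial m : ℚ)) *
      ∑ c ∈ Finset.univ.filter (fun c : Composition n => c.length = m),
        (c.blocks.map (fun j => (1 : ℚ) / (j : ℚ))).prod =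
      coeff m (bernoulliPowerSeries ℚ) * coeff n ((-negLogOneSub ℚ) ^ m) := by
    rw [sum_compositions_prod_one_div_eq_coeff_negLogOneSub_pow, coeff_neg_pow,
      bernoulliPowerSeries, coeff_mk, Algebra.algebraMap_self, RingHom.id_apply]
    ring
  calc _ = ∑ m ∈ range (n + 1),
          coeff m (bernoulliPowerSeries ℚ) * coeff n ((-negLogOneSub ℚ) ^ m) := by
        simp only [hterm]
        refine sum_subset (fun m hm => by simp at hm ⊢; omega) fun m hm hm' => ?_
        obtain rfl : m = 0 := by simp at hm hm'; omega
        simp [coeff_one, Nat.one_le_iff_ne_zero.mp hn]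
    _ = coeff n ((bernoulliPowerSeries ℚ).subst (-negLogOneSub ℚ)) :=
        (coeff_subst_eq_sum_range constantCoeff_neg_negLogOneSub n).symm
    _ = coeff (n + 1) ((bernoulliPowerSeries ℚ).subst (-negLogOneSub ℚ) * X) :=
        (coeff_succ_mul_X _ _).symm
    _ = coeff (n + 1) (negLogOneSub ℚ) :=
        congrArg _ bernoulliPowerSeries_subst_neg_negLogOneSub_mul_X
    _ = 1 / (n + 1 : ℚ) := by simp [coeff_negLogOneSub]
end

section
/- Let r ≥ 2 and d be integers. Then the set { (d₀, …, d_{r−1}) ∈ ℤ^r : d₀ + ⋯ + d_{r−1} = d, and r·(dᵢ + d_{i+1} + ⋯ + d_{r−1}) > (r−i)·d for every i = 1, …, r−1 } equals the set { v + ∑_{i=1}^{r−1} aᵢ·(εᵢ − ε_{i−1}) : aᵢ ∈ ℤ, aᵢ ≥ 0 }, where ε₀, …, ε_{r−1} is the standard basis of ℤ^r and v ∈ ℤ^r is given by v₀ = ⌈d/r⌉ − 1, vᵢ = ⌈(i+1)d/r⌉ − ⌈i d/r⌉ for 1 ≤ i ≤ r−2, and v_{r−1} = d − ⌈(r−1)d/r⌉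 + 1. -/
/-!
Pass to tail sums `Tₖ(x) = xₖ + ⋯ + x_{r-1}`: a vector is determined by `T₀, …, T_{r-1}`, and
for `0 < k < r` the strict inequality `r·Tₖ > (r-k)·d` reads `Tₖ ≥ d + 1 - ⌈kd/r⌉`, which is
exactly `Tₖ(v)`. Since `εᵢ - ε_{i-1}` has tail sums `Tₖ = [k = i]`, the point `w` with sum `d` is
`v + ∑ aᵢ(εᵢ - ε_{i-1})` for `aₖ = Tₖ(w) - Tₖ(v)`, and the condition is `aₖ ≥ 0`.
-/

/-- `ceilQ a b = ⌈a/b⌉` for integers `a, b`, the ceiling of the rational number `a/b`. -/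
def ceilQ (a b : ℤ) : ℤ := ⌈(a : ℚ) / (b : ℚ)⌉

/-- The apex `v ∈ ℤ^r` : `v₀ = ⌈d/r⌉ − 1`, `vᵢ = ⌈(i+1)d/r⌉ − ⌈id/r⌉` for
`1 ≤ i ≤ r−2`, and `v_{r−1} = d − ⌈(r−1)d/r⌉ + 1`. -/
def vVec (r : ℕ) (d : ℤ) : Fin r → ℤ := fun i =>
  if (i : ℕ) = 0 then ceilQ d r - 1
  else if (i : ℕ) = r - 1 then d - ceilQ (((r : ℤ) - 1) * d) r + 1
  else ceilQ ((((i : ℕ) : ℤ) + 1) * d) r - ceilQ (((i : ℕ) : ℤ) * d) r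

open Finset

namespace Fin

variable {M : Type*} [AddCommGroup M] {r : ℕ}

def tailSum (k : ℕ) (x : Fin r → M) : M :=
  ∑ j ∈ univ.filter (fun j : Fin r => k ≤ (j : ℕ)), x j

lemma tailSum_add (k : ℕ) (x y : Fin r → M) : tailSum k (x + y) = tailSum k x + tailSum k y :=
  sum_add_distrib

lemma tailSum_sum {ι : Type*} (s : Finset ι) (k : ℕ) (x : ι → Fin r → M) :
    tailSum k (∑ i ∈ s, x i) = ∑ i ∈ s, tailSum k (x i) := by
  simp only [tailSum, Finset.sum_apply]
  exact sum_comm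

lemma tailSum_zsmul (k : ℕ) (c : ℤ) (x : Fin r → M) : tailSum k (c • x) = c • tailSum k x := by
  simp only [tailSum, Pi.smul_apply, smul_sum]

lemma tailSum_zero (x : Fin r → M) : tailSum 0 x = ∑ j, x j := by
  simp [tailSum]

lemma tailSum_of_le {k : ℕ} (hk : r ≤ k) (x : Fin r → M) : tailSum k x = 0 := by
  refine sum_eq_zero fun j hj => ?_
  have := j.isLt
  simp only [mem_filter, mem_univ, true_and] at hj
  omega

lemma tailSum_eq_add_tailSum_succ (x : Fin r → M) (j : Fin r) :
    tailSum j x = x j + tailSum (j + 1) x := by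
  have hsplit : univ.filter (fun i : Fin r => (j : ℕ) ≤ i)
      = insert j (univ.filter fun i : Fin r => (j : ℕ) + 1 ≤ i) := by
    ext i
    simp only [mem_filter, mem_univ, true_and, mem_insert, Fin.ext_iff]
    omega
  rw [tailSum, hsplit, sum_insert (by simp), tailSum]

lemma eq_of_tailSum_eq {x y : Fin r → M} (h : ∀ k < r, tailSum k x = tailSum k y) :
    x = y := by
  funext j
  have hsucc : tailSum (j + 1) x = tailSum (j + 1) y := by
    rcases lt_or_ge ((j : ℕ) + 1) r with hj | hj
    · exact h _ hj
    · rw [tailSum_of_le hj, tailSum_of_le hj]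
  have := h j j.isLt
  rw [tailSum_eq_add_tailSum_succ x, tailSum_eq_add_tailSum_succ y, hsucc] at this
  exact add_right_cancel this

lemma tailSum_eq_sub_of_eq_sub {x : Fin r → M} {F : ℕ → M}
    (hx : ∀ j : Fin r, x j = F (j + 1) - F j) {k : ℕ} (hk : k ≤ r) :
    tailSum k x = F r - F k := by
  induction hk using Nat.decreasingInduction with
  | self => simp [tailSum_of_le le_rfl]
  | of_succ k hkr ih =>
    rw [tailSum_eq_add_tailSum_succ x ⟨k, hkr⟩, hx, ih]
    abel

lemma tailSum_single_sub_single_pred (i : Fin r) (hi : 0 < (i : ℕ)) (m : M) (k : ℕ) :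
    tailSum k (Pi.single i m - Pi.single ⟨(i : ℕ) - 1, by omega⟩ m) =
      if k = i then m else 0 := by
  simp only [tailSum, Pi.sub_apply, sum_sub_distrib, sum_pi_single', mem_filter, mem_univ,
    true_and]
  split_ifs <;> first | omega | simp

lemma tailSum_sum_zsmul_single_sub_single_pred (c : Fin r → ℤ) (m : M) {k : ℕ} (hk : k < r) :
    tailSum k (∑ i ∈ univ.filter (fun i : Fin r => 0 < (i : ℕ)),
        c i • (Pi.single i m - Pi.single ⟨(i : ℕ) - 1, by omega⟩ m)) =
      if 0 < k then c ⟨k, hk⟩ • m else 0 := by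
  rw [tailSum_sum, sum_congr rfl fun i hi => by
    rw [tailSum_zsmul, tailSum_single_sub_single_pred i (mem_filter.1 hi).2]]
  have hval : ∀ i : Fin r, k = i ↔ ⟨k, hk⟩ = i := fun i => by simp [Fin.ext_iff]
  simp only [smul_ite, smul_zero, hval, sum_ite_eq, mem_filter, mem_univ, true_and]

end Fin

open Fin

def vVecPrimitive (r : ℕ) (d : ℤ) (k : ℕ) : ℤ :=
  if k = 0 then 1 else if k = r then d + 1 else ceilQ (k * d) r

variable {r : ℕ} (d : ℤ)

lemma vVec_eq_sub (hr : 2 ≤ r) (j : Fin r) :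
    vVec r d j = vVecPrimitive r d (j + 1) - vVecPrimitive r d j := by
  have hj := j.isLt
  simp only [vVec, vVecPrimitive, Nat.add_one_ne_zero, if_false]
  by_cases h0 : (j : ℕ) = 0
  · simp [h0, show 1 ≠ r by omega]
  by_cases hlast : (j : ℕ) = r - 1
  · have hj' : ((j : ℕ) : ℤ) = r - 1 := by omega
    rw [if_neg h0, if_pos hlast, if_pos (by omega), if_neg h0, if_neg (by omega), hj']
    ring
  · rw [if_neg h0, if_neg hlast, if_neg (by omega), if_neg h0, if_neg (by omega)]
    push_cast
    rfl

lemma tailSum_vVec (hr : 2 ≤ r) {k : ℕ} (hk : k ≤ r) :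
    tailSum k (vVec r d) = d + 1 - vVecPrimitive r d k := by
  rw [tailSum_eq_sub_of_eq_sub (vVec_eq_sub d hr) hk, vVecPrimitive, if_neg (by omega), if_pos rfl]

lemma lt_ceilQ_iff {a b : ℤ} (hb : 0 < b) (n : ℤ) : n < ceilQ a b ↔ b * n < a := by
  rw [ceilQ, Int.lt_ceil, lt_div_iff₀ (by exact_mod_cast hb), mul_comm]
  exact_mod_cast Iff.rfl

lemma sub_mul_lt_mul_iff {r : ℤ} (hr : 0 < r) (k d t : ℤ) :
    (r - k) * d < r * t ↔ d + 1 - ceilQ (k * d) r ≤ t := by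
  rw [← Int.sub_one_lt_iff, show d + 1 - ceilQ (k * d) r - 1 = d - ceilQ (k * d) r by ring,
    sub_lt_comm, lt_ceilQ_iff hr]
  constructor <;> intro h <;> linarith

lemma tailSum_vVec_add_sum_zsmul (hr : 2 ≤ r) (c : Fin r → ℤ) {k : ℕ} (hk : k < r) :
    tailSum k (vVec r d + ∑ i ∈ univ.filter (fun i : Fin r => 0 < (i : ℕ)),
        c i • (Pi.single i (1 : ℤ) - Pi.single ⟨(i : ℕ) - 1, by omega⟩ 1)) =
      if 0 < k then d + 1 - ceilQ (k * d) r + c ⟨k, hk⟩ else d := by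
  rw [tailSum_add, tailSum_vVec d hr hk.le, tailSum_sum_zsmul_single_sub_single_pred c 1 hk,
    vVecPrimitive]
  split_ifs <;> first | omega | simp

/-- For integers `r ≥ 2` and `d`, the set of `(d₀, …, d_{r−1}) ∈ ℤ^r` with total sum `d`
and `r·(dᵢ + ⋯ + d_{r−1}) > (r−i)·d` for all `i = 1, …, r−1` is the simple sector
`{v + ∑_{i=1}^{r−1} aᵢ(εᵢ − ε_{i−1}) : aᵢ ∈ ℕ}` with apex `v = vVec r d`. -/
theorem strict_degree_sector_eq (r : ℕ) (hr : 2 ≤ r) (d : ℤ) :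
    {dv : Fin r → ℤ | (∑ i, dv i) = d ∧
      ∀ i ∈ Finset.Ico 1 r,
        ((r : ℤ) - (i : ℤ)) * d <
          (r : ℤ) * ∑ j ∈ Finset.univ.filter (fun j : Fin r => i ≤ (j : ℕ)), dv j} =
    {w : Fin r → ℤ | ∃ a : Fin r → ℕ,
      w = vVec r d + ∑ i ∈ Finset.univ.filter (fun i : Fin r => 0 < (i : ℕ)),
        (a i : ℤ) • (Pi.single i (1 : ℤ) -
          Pi.single (⟨(i : ℕ) - 1, lt_of_le_of_lt (Nat.sub_le _ _) i.isLt⟩ : Fin r)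
            (1 : ℤ))} := by
  have hr0 : (0 : ℤ) < r := by omega
  ext w
  constructor
  · rintro ⟨hsum, htail⟩
    refine ⟨fun i => (tailSum i w - (d + 1 - ceilQ (i * d) r)).toNat,
      eq_of_tailSum_eq fun k hk => ?_⟩
    rw [tailSum_vVec_add_sum_zsmul d hr _ hk]
    split_ifs with hk0
    · have := (sub_mul_lt_mul_iff hr0 _ _ _).1 (htail k (mem_Ico.2 ⟨hk0, hk⟩))
      change _ ≤ tailSum k w at this
      dsimp only
      omega
    · rw [Nat.eq_zero_of_not_pos hk0, tailSum_zero, hsum]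
  · rintro ⟨a, rfl⟩
    constructor
    · have := tailSum_vVec_add_sum_zsmul d hr (fun i => (a i : ℤ)) (show 0 < r by omega)
      rwa [if_neg (lt_irrefl 0), tailSum_zero] at this
    · intro k hk
      obtain ⟨hk0, hkr⟩ := mem_Ico.1 hk
      rw [sub_mul_lt_mul_iff hr0]
      change _ ≤ tailSum k _
      rw [tailSum_vVec_add_sum_zsmul d hr _ hkr, if_pos (by omega)]
      omega
end

section
/- Let r ≥ 1 and d be integers and let I ⊆ {1, …, r−1}. Consider the set Σ_I of all (d₀, …, d_{r−1}) ∈ ℤ^r with d₀ + ⋯ + d_{r−1} = d such that r·(dᵢ + ⋯ + d_{r−1}) ≥ (r−i)·d for every i = 1, …, r−1, with equality r·(dᵢ + ⋯ + d_{r−1}) = (r−i)·d for every i ∈ I. Then: (1) Σ_I is non-empty if and only if r divides i·d for every i ∈ I; and (2) in that case, Σ_I = { w + ∑_{i ∈ {1,…,r−1}∖I} aᵢ·(εᵢ − ε_{i−1}) : aᵢ ∈ ℤ, aᵢ ≥ 0 }, where ε₀, …, ε_{r−1} is the standard basis of ℤ^r and w ∈ ℤ^r is given by wᵢ = ⌊(i+1)d/r⌋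 − ⌊i d/r⌋ for 0 ≤ i ≤ r−1 (so w₀ = ⌊d/r⌋ and w_{r−1} = d − ⌊(r−1)d/r⌋). -/
/-- The apex `w ∈ ℤ^r` given by `wᵢ = ⌊(i+1)d/r⌋ − ⌊id/r⌋` for `0 ≤ i ≤ r−1`. -/
def wVec (r : ℕ) (d : ℤ) : Fin r → ℤ := fun i =>
  ⌊(((((i : ℕ) : ℤ) + 1) * d : ℤ) : ℚ) / (r : ℚ)⌋ -
    ⌊(((((i : ℕ) : ℤ)) * d : ℤ) : ℚ) / (r : ℚ)⌋

section Aux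
variable {r : ℕ}

/-- Tail sum `T dv k = ∑_{j ≥ k} dv j`. -/
def Tsum (r : ℕ) (dv : Fin r → ℤ) (k : ℕ) : ℤ :=
  ∑ j ∈ Finset.univ.filter (fun j : Fin r => k ≤ (j : ℕ)), dv j

lemma Tsum_zero (dv : Fin r → ℤ) : Tsum r dv 0 = ∑ i, dv i := by
  unfold Tsum
  rw [Finset.filter_true_of_mem (fun j _ => Nat.zero_le _)]

lemma Tsum_of_ge (dv : Fin r → ℤ) {k : ℕ} (h : r ≤ k) : Tsum r dv k = 0 := by
  unfold Tsum
  rw [Finset.filter_false_of_mem, Finset.sum_empty]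
  intro j _
  omega

lemma Tsum_succ (dv : Fin r → ℤ) {k : ℕ} (hk : k < r) :
    Tsum r dv k = dv ⟨k, hk⟩ + Tsum r dv (k + 1) := by
  have hset : Finset.univ.filter (fun j : Fin r => k ≤ (j : ℕ)) =
      insert ⟨k, hk⟩ (Finset.univ.filter (fun j : Fin r => k + 1 ≤ (j : ℕ))) := by
    ext j
    simp only [Finset.mem_filter, Finset.mem_insert, Finset.mem_univ, true_and, Fin.ext_iff]
    omega
  rw [Tsum, hset, Finset.sum_insert (by simp)]
  rfl

lemma Tsum_ext {f g : Fin r → ℤ} (h : ∀ k, Tsum r f k = Tsum r g k) : f = g := by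
  funext j
  have h1 := Tsum_succ f j.isLt
  have h2 := Tsum_succ g j.isLt
  have := h (j : ℕ)
  have := h ((j : ℕ) + 1)
  have hj : f ⟨(j : ℕ), j.isLt⟩ = f j := by congr
  have hj' : g ⟨(j : ℕ), j.isLt⟩ = g j := by congr
  rw [hj] at h1; rw [hj'] at h2
  omega

lemma Tsum_add (f g : Fin r → ℤ) (k : ℕ) :
    Tsum r (f + g) k = Tsum r f k + Tsum r g k := by
  simp [Tsum, Finset.sum_add_distrib]

lemma Tsum_sub (f g : Fin r → ℤ) (k : ℕ) :
    Tsum r (f - g) k = Tsum r f k - Tsum r g k := by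
  simp [Tsum, Finset.sum_sub_distrib]

lemma Tsum_smul (c : ℤ) (f : Fin r → ℤ) (k : ℕ) :
    Tsum r (c • f) k = c * Tsum r f k := by
  simp [Tsum, Finset.mul_sum]

lemma Tsum_sum {ι : Type*} (s : Finset ι) (f : ι → Fin r → ℤ) (k : ℕ) :
    Tsum r (∑ i ∈ s, f i) k = ∑ i ∈ s, Tsum r (f i) k := by
  simp only [Tsum, Finset.sum_apply]
  rw [Finset.sum_comm]

lemma Tsum_single (j : Fin r) (c : ℤ) (k : ℕ) :
    Tsum r (Pi.single j c) k = if k ≤ (j : ℕ) then c else 0 := by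
  unfold Tsum
  by_cases h : k ≤ (j : ℕ)
  · rw [if_pos h, Finset.sum_eq_single_of_mem j (by simp [h])]
    · simp
    · intro b _ hb
      simp [Pi.single_apply, hb]
  · rw [if_neg h, Finset.sum_eq_zero]
    intro b hb
    simp only [Finset.mem_filter, Finset.mem_univ, true_and] at hb
    have : b ≠ j := by rintro rfl; exact h hb
    simp [Pi.single_apply, this]

lemma wVec_apply (r : ℕ) (d : ℤ) (i : Fin r) :
    wVec r d i = (((i : ℕ) : ℤ) + 1) * d / (r : ℤ) - ((i : ℕ) : ℤ) * d / (r : ℤ) := by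
  unfold wVec
  rw [Rat.floor_intCast_div_natCast, Rat.floor_intCast_div_natCast]

lemma Tsum_wVec (hr : 0 < r) (d : ℤ) : ∀ k, k ≤ r →
    Tsum r (wVec r d) k = d - ((k : ℤ) * d) / (r : ℤ) := by
  have main : ∀ j, j ≤ r →
      Tsum r (wVec r d) (r - j) = d - (((r - j : ℕ) : ℤ) * d) / (r : ℤ) := by
    intro j
    induction j with
    | zero =>
      intro _
      rw [Nat.sub_zero, Tsum_of_ge _ le_rfl]
      rw [Int.mul_ediv_cancel_left d (by exact_mod_cast hr.ne')]
      ring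
    | succ n ih =>
      intro hn
      have h1 : r - (n + 1) < r := by omega
      have h2 : r - (n + 1) + 1 = r - n := by omega
      rw [Tsum_succ _ h1, h2, ih (by omega), wVec_apply]
      have h3 : ((↑(r - (n+1)) : ℤ) + 1) = ((r - n : ℕ) : ℤ) := by
        push_cast [Nat.cast_sub (by omega : n + 1 ≤ r), Nat.cast_sub (by omega : n ≤ r)]
        ring
      rw [h3]
      ring
  intro k hk
  have := main (r - k) (by omega)
  rwa [Nat.sub_sub_self hk] at this

lemma Tsum_moves (hr : 0 < r) (I : Finset ℕ) (a : Fin r → ℕ) (k : ℕ) :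
    Tsum r (∑ i ∈ Finset.univ.filter
        (fun i : Fin r => 0 < (i : ℕ) ∧ (i : ℕ) ∉ I),
      (a i : ℤ) • (Pi.single i (1 : ℤ) -
        Pi.single (⟨(i : ℕ) - 1, lt_of_le_of_lt (Nat.sub_le _ _) i.isLt⟩ : Fin r)
          (1 : ℤ))) k
    = if h : k < r ∧ 0 < k ∧ k ∉ I then (a ⟨k, h.1⟩ : ℤ) else 0 := by
  rw [Tsum_sum]
  have step : ∀ i ∈ Finset.univ.filter
      (fun i : Fin r => 0 < (i : ℕ) ∧ (i : ℕ) ∉ I),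
      Tsum r ((a i : ℤ) • (Pi.single i (1 : ℤ) -
        Pi.single (⟨(i : ℕ) - 1, lt_of_le_of_lt (Nat.sub_le _ _) i.isLt⟩ : Fin r)
          (1 : ℤ))) k = if (i : ℕ) = k then (a i : ℤ) else 0 := by
    intro i hi
    simp only [Finset.mem_filter, Finset.mem_univ, true_and] at hi
    rw [Tsum_smul, Tsum_sub, Tsum_single, Tsum_single]
    have hval : ((⟨(i : ℕ) - 1, lt_of_le_of_lt (Nat.sub_le _ _) i.isLt⟩ : Fin r) : ℕ)
        = (i : ℕ) - 1 := rfl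
    rw [hval]
    have h1 : 0 < (i : ℕ) := hi.1
    by_cases q : (i : ℕ) = k
    · rw [if_pos q, if_pos (by omega), if_neg (by omega)]
      ring
    · rw [if_neg q]
      by_cases p : k ≤ (i : ℕ)
      · rw [if_pos p, if_pos (by omega)]
        ring
      · rw [if_neg p, if_neg (by omega)]
        ring
  rw [Finset.sum_congr rfl step]
  by_cases h : k < r ∧ 0 < k ∧ k ∉ I
  · rw [dif_pos h]
    have hcongr : ∀ i ∈ Finset.univ.filter
        (fun i : Fin r => 0 < (i : ℕ) ∧ (i : ℕ) ∉ I),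
        (if (i : ℕ) = k then (a i : ℤ) else 0)
          = if i = ⟨k, h.1⟩ then (a i : ℤ) else 0 := by
      intro i _
      simp [Fin.ext_iff]
    rw [Finset.sum_congr rfl hcongr, Finset.sum_ite_eq' _ (⟨k, h.1⟩ : Fin r)]
    rw [if_pos (by simp [h.2.1, h.2.2])]
  · rw [dif_neg h, Finset.sum_eq_zero]
    intro i hi
    simp only [Finset.mem_filter, Finset.mem_univ, true_and] at hi
    rw [if_neg]
    intro hik
    exact h ⟨hik ▸ i.isLt, hik ▸ hi.1, hik ▸ hi.2⟩

end Aux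

/-- For `r ≥ 1`, `d ∈ ℤ` and `I ⊆ {1, …, r−1}`, let `Σ_I` be the set of
`(d₀, …, d_{r−1}) ∈ ℤ^r` with total sum `d`, satisfying
`r·(dᵢ + ⋯ + d_{r−1}) ≥ (r−i)·d` for all `i = 1, …, r−1`, with equality for `i ∈ I`.
Then (1) `Σ_I ≠ ∅` iff `r ∣ i·d` for all `i ∈ I`, and (2) in that case `Σ_I` is the
simple sector `{w + ∑_{i ∈ {1,…,r−1}∖I} aᵢ(εᵢ − ε_{i−1}) : aᵢ ∈ ℕ}` with apex
`w = wVec r d`. -/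
theorem degree_sector_with_equalities (r : ℕ) (hr : 1 ≤ r) (d : ℤ) (I : Finset ℕ)
    (hI : I ⊆ Finset.Ico 1 r) :
    let S : Set (Fin r → ℤ) :=
      {dv : Fin r → ℤ | (∑ i, dv i) = d ∧
        ∀ i ∈ Finset.Ico 1 r,
          ((r : ℤ) - (i : ℤ)) * d ≤
            (r : ℤ) * (∑ j ∈ Finset.univ.filter (fun j : Fin r => i ≤ (j : ℕ)), dv j) ∧
          (i ∈ I →
            (r : ℤ) * (∑ j ∈ Finset.univ.filter (fun j : Fin r => i ≤ (j : ℕ)), dv j) =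
              ((r : ℤ) - (i : ℤ)) * d)}
    (S.Nonempty ↔ ∀ i ∈ I, (r : ℤ) ∣ (i : ℤ) * d) ∧
    ((∀ i ∈ I, (r : ℤ) ∣ (i : ℤ) * d) →
      S = {w : Fin r → ℤ | ∃ a : Fin r → ℕ,
        w = wVec r d + ∑ i ∈ Finset.univ.filter
            (fun i : Fin r => 0 < (i : ℕ) ∧ (i : ℕ) ∉ I),
          (a i : ℤ) • (Pi.single i (1 : ℤ) -
            Pi.single (⟨(i : ℕ) - 1, lt_of_le_of_lt (Nat.sub_le _ _) i.isLt⟩ : Fin r)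
              (1 : ℤ))}) := by
  intro S
  have hr0 : 0 < r := hr
  have hrz : ((r : ℤ)) ≠ 0 := by exact_mod_cast hr0.ne'
  have hrpos : (0 : ℤ) < (r : ℤ) := by exact_mod_cast hr0
  set F : (Fin r → ℕ) → (Fin r → ℤ) := fun a =>
    ∑ i ∈ Finset.univ.filter (fun i : Fin r => 0 < (i : ℕ) ∧ (i : ℕ) ∉ I),
      (a i : ℤ) • (Pi.single i (1 : ℤ) -
        Pi.single (⟨(i : ℕ) - 1, lt_of_le_of_lt (Nat.sub_le _ _) i.isLt⟩ : Fin r)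
          (1 : ℤ)) with hF
  have memS : ∀ dv : Fin r → ℤ, dv ∈ S ↔
      ((∑ i, dv i) = d ∧ ∀ i ∈ Finset.Ico 1 r,
        ((r : ℤ) - (i : ℤ)) * d ≤ (r : ℤ) * Tsum r dv i ∧
        (i ∈ I → (r : ℤ) * Tsum r dv i = ((r : ℤ) - (i : ℤ)) * d)) := fun _ => Iff.rfl
  -- ⊇ direction / membership of apex translates
  have sup_claim : (∀ i ∈ I, (r : ℤ) ∣ (i : ℤ) * d) → ∀ a : Fin r → ℕ,
      (wVec r d + F a) ∈ S := by
    intro hdvd a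
    rw [memS]
    have hT : ∀ k, k ≤ r → Tsum r (wVec r d + F a) k =
        (d - ((k : ℤ) * d) / (r : ℤ)) +
          (if h : k < r ∧ 0 < k ∧ k ∉ I then (a ⟨k, h.1⟩ : ℤ) else 0) := by
      intro k hk
      rw [Tsum_add, Tsum_wVec hr0 d k hk, hF]
      rw [Tsum_moves hr0]
    constructor
    · rw [← Tsum_zero, hT 0 (by omega)]
      norm_num
    · intro i hi
      rw [Finset.mem_Ico] at hi
      rw [hT i hi.2.le]
      have hq : (((i : ℤ) * d) / (r : ℤ)) * (r : ℤ) ≤ (i : ℤ) * d :=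
        Int.ediv_mul_le _ hrz
      constructor
      · have hc : (0 : ℤ) ≤
            (if h : i < r ∧ 0 < i ∧ i ∉ I then (a ⟨i, h.1⟩ : ℤ) else 0) := by
          split <;> positivity
        have hi' : ((i : ℤ)) ≤ (r : ℤ) := by exact_mod_cast hi.2.le
        nlinarith [hc, hq, hrpos]
      · intro hiI
        rw [dif_neg (by tauto)]
        have hq' : (((i : ℤ) * d) / (r : ℤ)) * (r : ℤ) = (i : ℤ) * d :=
          Int.ediv_mul_cancel (hdvd i hiI)
        linear_combination -hq' 
  -- ⊆ direction
  have sub_claim : ∀ dv ∈ S, (∀ i ∈ I, (r : ℤ) ∣ (i : ℤ) * d) ∧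
      ∃ a : Fin r → ℕ, dv = wVec r d + F a := by
    intro dv hdv
    rw [memS] at hdv
    obtain ⟨hsum, hcond⟩ := hdv
    have hsum' : Tsum r dv 0 = d := by rw [Tsum_zero]; exact hsum
    have hdvd : ∀ i ∈ I, (r : ℤ) ∣ (i : ℤ) * d := by
      intro i hiI
      have heq := (hcond i (hI hiI)).2 hiI
      exact ⟨d - Tsum r dv i, by linear_combination heq⟩
    refine ⟨hdvd, ?_⟩
    have hlow : ∀ i, 1 ≤ i → i < r → d - ((i : ℤ) * d) / (r : ℤ) ≤ Tsum r dv i := by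
      intro i h1 h2
      have hge := (hcond i (Finset.mem_Ico.2 ⟨h1, h2⟩)).1
      have h3 : (i : ℤ) * d < (((i : ℤ) * d) / (r : ℤ) + 1) * (r : ℤ) :=
        Int.lt_ediv_add_one_mul_self _ hrpos
      by_contra hcon
      push_neg at hcon
      have hcon' : Tsum r dv i ≤ d - ((i : ℤ) * d) / (r : ℤ) - 1 := by omega
      nlinarith [hge, h3, hrpos]
    have hexact : ∀ i ∈ I, Tsum r dv i = d - ((i : ℤ) * d) / (r : ℤ) := by
      intro i hiI
      have heq := (hcond i (hI hiI)).2 hiI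
      have hq : (((i : ℤ) * d) / (r : ℤ)) * (r : ℤ) = (i : ℤ) * d :=
        Int.ediv_mul_cancel (hdvd i hiI)
      exact mul_left_cancel₀ hrz (by linear_combination heq + hq)
    refine ⟨fun i => if 0 < (i : ℕ) ∧ (i : ℕ) ∉ I then
        (Tsum r dv i - (d - (((i : ℕ) : ℤ) * d) / (r : ℤ))).toNat else 0, ?_⟩
    apply Tsum_ext
    intro k
    rw [Tsum_add, hF, Tsum_moves hr0]
    by_cases hk : k < r
    · rw [Tsum_wVec hr0 d k hk.le]
      by_cases hk0 : 0 < k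
      · by_cases hkI : k ∈ I
        · rw [dif_neg (by tauto), hexact k hkI]
          ring
        · rw [dif_pos ⟨hk, hk0, hkI⟩]
          have hc : (0 : ℤ) ≤ Tsum r dv k - (d - ((k : ℤ) * d) / (r : ℤ)) := by
            have := hlow k hk0 hk
            linarith
          simp only []
          rw [if_pos (show 0 < ((⟨k, hk⟩ : Fin r) : ℕ) ∧ ((⟨k, hk⟩ : Fin r) : ℕ) ∉ I from ⟨hk0, hkI⟩)]
          rw [Int.toNat_of_nonneg hc]
          ring
      · have hk0' : k = 0 := by omega
        subst hk0'
        rw [dif_neg (by omega), hsum']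
        norm_num
    · rw [Tsum_of_ge _ (le_of_not_gt hk), Tsum_of_ge _ (le_of_not_gt hk),
        dif_neg (by tauto)]
      ring
  constructor
  · constructor
    · rintro ⟨dv, hdv⟩
      exact (sub_claim dv hdv).1
    · intro hdvd
      exact ⟨_, sup_claim hdvd (fun _ => 0)⟩
  · intro hdvd
    ext dv
    constructor
    · intro h
      obtain ⟨a, ha⟩ := (sub_claim dv h).2
      exact ⟨a, ha⟩
    · rintro ⟨a, rfl⟩
      exact sup_claim hdvd a
end
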